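/- arXiv:2203.05108 — 10 statements merged into one kernel-verified Lean document; each statement's English description precedes it below -/
import Mathlib

section
/- Let S = {p₁,…,p_m} be a finite set of probability distributions, each on n states with values sorted nonincreasingly, let G_S denote the sequence of state-weights produced by the greedy coupling algorithm, and let M_S denote the sorted value sequence of ∧S. Then for every step i ≥ 1 and every j ∈ {1,…,n}, G_S(i) ≥ (∑_{k=1}^{j} M_S(k) − ∑_{k=1}^{i−1} G_S(k)) / j. -/
open Finset Real

/-- **Theorem 1 (closed-form lower bound for the greedy coupling).**
`p ℓ t` is the residual vector of the `ℓ`-th distribution before (0-indexed) step `t`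
of the greedy coupling algorithm (any tie-breaking), `G t` is the weight produced at
step `t`, and `M` is the sorted value sequence of `∧S`.  Then for every step `t`
and every `j ∈ {1,…,n}` (here `j : Fin n`, 0-indexed, prefix length `j+1`),
`G t ≥ (∑_{k=1}^{j} M k − ∑_{k=1}^{t-1} G k) / j`. -/
theorem greedy_coupling_lower_bound
    (m n : ℕ) [NeZero m] [NeZero n]
    (p : Fin m → ℕ → Fin n → ℝ)      -- residuals: `p ℓ t` before step `t`; `p ℓ 0 = p_ℓ`
    (G : ℕ → ℝ)                       -- greedy output sequence
    (M : Fin n → ℝ)                   -- sorted values of ∧S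
    (hsort : ∀ ℓ, Antitone (p ℓ 0))
    (hpos : ∀ ℓ k, 0 ≤ p ℓ 0 k)
    (hsum : ∀ ℓ, ∑ k, p ℓ 0 k = 1)
    -- at each step, the greedy weight is the min over distributions of the maximal entry
    (hG : ∀ t, G t = univ.inf' univ_nonempty fun ℓ => univ.sup' univ_nonempty (p ℓ t))
    -- each residual is updated by subtracting the greedy weight from a maximal entry
    (hstep : ∀ t ℓ, ∃ k, (∀ k', p ℓ t k' ≤ p ℓ t k) ∧
      p ℓ (t + 1) = Function.update (p ℓ t) k (p ℓ t k - G t))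
    -- the defining recursion of `∧S`
    (hM : ∀ i, M i =
      (univ.inf' univ_nonempty fun ℓ => ∑ j ∈ Iic i, p ℓ 0 j) - ∑ j ∈ Iio i, M j) :
    ∀ (t : ℕ) (j : Fin n),
      ((∑ k ∈ Iic j, M k) - ∑ k ∈ Finset.range t, G k) / ((j : ℝ) + 1) ≤ G t := by

  -- residuals stay nonnegative
  have hnn : ∀ t ℓ k, 0 ≤ p ℓ t k := by
    intro t
    induction t with
    | zero => exact hpos
    | succ t ih =>
      intro ℓ k
      obtain ⟨kmax, hmax, hupd⟩ := hstep t ℓ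
      have hGle : G t ≤ p ℓ t kmax := by
        rw [hG t]
        exact le_trans (Finset.inf'_le _ (mem_univ ℓ))
          (Finset.sup'_le _ _ fun k' _ => hmax k')
      rw [hupd]
      rcases eq_or_ne k kmax with rfl | hne
      · simpa using sub_nonneg.mpr hGle |>.trans_eq rfl
      · rw [Function.update_of_ne hne]; exact ih ℓ k
  -- G is nonnegative
  have hGnn : ∀ t, 0 ≤ G t := by
    intro t
    rw [hG t]
    apply Finset.le_inf'
    intro ℓ _
    exact le_trans (hnn t ℓ 0) (Finset.le_sup' _ (mem_univ 0))
  -- prefix sums of residuals drop by at most G per step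
  have hpre : ∀ t ℓ (j : Fin n),
      ∑ k ∈ Iic j, p ℓ 0 k ≤ ∑ k ∈ Iic j, p ℓ t k + ∑ s ∈ Finset.range t, G s := by
    intro t
    induction t with
    | zero => simp
    | succ t ih =>
      intro ℓ j
      obtain ⟨kmax, hmax, hupd⟩ := hstep t ℓ
      have key : ∑ k ∈ Iic j, p ℓ t k ≤ ∑ k ∈ Iic j, p ℓ (t+1) k + G t := by
        rw [hupd]
        by_cases hk : kmax ∈ Iic j
        · have h1 := Finset.sum_update_of_mem hk (p ℓ t) (p ℓ t kmax - G t)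
          have h2 : ∑ k ∈ Iic j, p ℓ t k
              = p ℓ t kmax + ∑ k ∈ Iic j \ {kmax}, p ℓ t k :=
            (Finset.add_sum_erase _ _ hk).symm.trans (by rw [Finset.sdiff_singleton_eq_erase])
          rw [h1]
          rw [Finset.sdiff_singleton_eq_erase] at h2 ⊢
          linarith
        · rw [Finset.sum_update_of_notMem hk]
          linarith [hGnn t]
      have := ih ℓ j
      rw [Finset.sum_range_succ]
      linarith
  intro t j
  -- prefix sums of M are the inf of original prefix sums
  have hMpre : ∑ k ∈ Iic j, M k
      = univ.inf' univ_nonempty fun ℓ => ∑ k ∈ Iic j, p ℓ 0 k := by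
    have h0 : ∑ k ∈ Iic j, M k = M j + ∑ k ∈ Iio j, M k := by
      rw [← Finset.Iio_insert, Finset.sum_insert (by simp)]
    rw [h0, hM j]
    ring
  -- pick the distribution achieving the inf in G t
  obtain ⟨ℓ, -, hℓ⟩ := Finset.exists_mem_eq_inf' (univ_nonempty (α := Fin m))
    (fun ℓ => univ.sup' univ_nonempty (p ℓ t))
  have hGt : G t = univ.sup' univ_nonempty (p ℓ t) := by rw [hG t, hℓ]
  have hcard : (Iic j).card = (j : ℕ) + 1 := by
    exact Fin.card_Iic j
  have htop : ∑ k ∈ Iic j, p ℓ t k ≤ ((j : ℝ) + 1) * G t := by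
    calc ∑ k ∈ Iic j, p ℓ t k ≤ (Iic j).card • G t := by
          apply Finset.sum_le_card_nsmul
          intro k _
          rw [hGt]
          exact Finset.le_sup' _ (mem_univ k)
      _ = ((j : ℝ) + 1) * G t := by
          rw [nsmul_eq_mul, hcard]
          push_cast
          ring
  have hMle : ∑ k ∈ Iic j, M k ≤ ∑ k ∈ Iic j, p ℓ 0 k := by
    rw [hMpre]
    exact Finset.inf'_le _ (mem_univ ℓ)
  have hjpos : (0 : ℝ) < (j : ℝ) + 1 := by positivity
  rw [div_le_iff₀ hjpos]
  have := hpre t ℓ j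
  nlinarith [hGnn t]
end

section
/- Let S = {p₁,…,p_m} be a finite set of probability distributions, each on n states with values sorted nonincreasingly, and run the greedy coupling algorithm, writing p_ℓ^i for the residual vector of p_ℓ before step i, G_S for the greedy output sequence, and M_S for the sorted value sequence of ∧S. Then for every ℓ ∈ {1,…,m} and every j ∈ {1,…,n}, max_{1≤k≤n} p_ℓ^i(k) ≥ (∑_{k=1}^{j} M_S(k) − ∑_{k=1}^{i−1} G_S(k)) / j. -/
open Finset Real

/-- **Claim 1.**  With `p ℓ t` the residual vector of the `ℓ`-th distribution before
(0-indexed) step `t` of the greedy coupling algorithm, `G` the greedy output sequence and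
`M` the sorted value sequence of `∧S`:  for every step `t`, every `ℓ` and every
`j ∈ {1,…,n}` (here `j : Fin n`, 0-indexed, prefix length `j+1`),
`max_{1≤k≤n} p ℓ t k ≥ (∑_{k=1}^{j} M k − ∑_{k=1}^{t-1} G k) / j`. -/
theorem greedy_coupling_residual_max_lower_bound
    (m n : ℕ) [NeZero m] [NeZero n]
    (p : Fin m → ℕ → Fin n → ℝ)      -- residuals: `p ℓ t` before step `t`; `p ℓ 0 = p_ℓ`
    (G : ℕ → ℝ)                       -- greedy output sequence
    (M : Fin n → ℝ)                   -- sorted values of ∧S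
    (hsort : ∀ ℓ, Antitone (p ℓ 0))
    (hpos : ∀ ℓ k, 0 ≤ p ℓ 0 k)
    (hsum : ∀ ℓ, ∑ k, p ℓ 0 k = 1)
    (hG : ∀ t, G t = univ.inf' univ_nonempty fun ℓ => univ.sup' univ_nonempty (p ℓ t))
    (hstep : ∀ t ℓ, ∃ k, (∀ k', p ℓ t k' ≤ p ℓ t k) ∧
      p ℓ (t + 1) = Function.update (p ℓ t) k (p ℓ t k - G t))
    (hM : ∀ i, M i =
      (univ.inf' univ_nonempty fun ℓ => ∑ j ∈ Iic i, p ℓ 0 j) - ∑ j ∈ Iio i, M j) :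
    ∀ (t : ℕ) (ℓ : Fin m) (j : Fin n),
      ((∑ k ∈ Iic j, M k) - ∑ k ∈ Finset.range t, G k) / ((j : ℝ) + 1) ≤
        univ.sup' univ_nonempty (p ℓ t) := by
  have hsup0 : ∀ t (ℓ : Fin m), 0 ≤ univ.sup' univ_nonempty (p ℓ t) := by
    intro t
    induction t with
    | zero =>
      intro ℓ
      exact le_trans (hpos ℓ ⟨0, Nat.pos_of_ne_zero (NeZero.ne n)⟩)
        (le_sup' _ (mem_univ _))
    | succ t ih =>
      intro ℓ
      obtain ⟨k, hk, heq⟩ := hstep t ℓ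
      have hsupk : univ.sup' univ_nonempty (p ℓ t) = p ℓ t k :=
        le_antisymm (sup'_le _ _ fun k' _ => hk k') (le_sup' _ (mem_univ k))
      have hGle : G t ≤ p ℓ t k := by
        rw [hG t, ← hsupk]; exact inf'_le _ (mem_univ ℓ)
      have h0 : 0 ≤ p ℓ (t+1) k := by
        rw [heq, Function.update_self]; linarith
      exact le_trans h0 (le_sup' _ (mem_univ k))
  have hG0 : ∀ t, 0 ≤ G t := fun t => by
    rw [hG t]; exact le_inf' _ _ fun ℓ _ => hsup0 t ℓ
  have hBsum : ∀ t (ℓ : Fin m) (j : Fin n),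
      (∑ k ∈ Iic j, p ℓ 0 k) - ∑ s ∈ Finset.range t, G s ≤ ∑ k ∈ Iic j, p ℓ t k := by
    intro t ℓ j
    induction t with
    | zero => simp
    | succ t ih =>
      obtain ⟨k, hk, heq⟩ := hstep t ℓ
      have h1 : ∑ x ∈ Iic j, p ℓ (t+1) x
          = (∑ x ∈ Iic j, p ℓ t x) - (if k ∈ Iic j then G t else 0) := by
        rw [heq]
        have hcong : ∀ x ∈ Iic j,
            Function.update (p ℓ t) k (p ℓ t k - G t) x
              = p ℓ t x - (if x = k then G t else 0) := by
          intro x _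
          rcases eq_or_ne x k with h | h
          · subst h; simp
          · simp [h]
        rw [Finset.sum_congr rfl hcong, Finset.sum_sub_distrib,
          Finset.sum_ite_eq' (Iic j) k (fun _ => G t)]
      rw [Finset.sum_range_succ, h1]
      have := hG0 t
      split_ifs <;> linarith
  intro t ℓ j
  have hM' : ∑ k ∈ Iic j, M k ≤ ∑ k ∈ Iic j, p ℓ 0 k := by
    have hiic : ∑ k ∈ Iic j, M k
        = univ.inf' univ_nonempty fun ℓ => ∑ k ∈ Iic j, p ℓ 0 k := by
      have h2 : ∑ k ∈ Iic j, M k = M j + ∑ k ∈ Iio j, M k := by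
        rw [← Finset.Iio_insert, Finset.sum_insert (by simp)]
      rw [h2, hM j]; ring
    rw [hiic]
    exact inf'_le _ (mem_univ ℓ)
  rw [div_le_iff₀ (by positivity)]
  have hcard : ((Iic j).card : ℝ) = (j : ℝ) + 1 := by
    rw [Fin.card_Iic]; push_cast; ring
  have hjsum : ∑ x ∈ Iic j, p ℓ t x
      ≤ (univ.sup' univ_nonempty (p ℓ t)) * ((j : ℝ) + 1) := by
    calc ∑ x ∈ Iic j, p ℓ t x
        ≤ ∑ _x ∈ Iic j, univ.sup' univ_nonempty (p ℓ t) :=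
          Finset.sum_le_sum fun x _ => le_sup' _ (mem_univ x)
      _ = _ := by rw [Finset.sum_const, nsmul_eq_mul, hcard]; ring
  linarith [hBsum t ℓ j]
end

section
/- Let p be a probability distribution on n states with values sorted nonincreasingly, and let G′ be the sequence defined recursively by G′(i) = max_{1≤j≤n} (∑_{k=1}^{j} p(k) − ∑_{k=1}^{i−1} G′(k)) / j. Then G′ is a probability distribution that couples MajorizingSet(p), and every distribution C that couples MajorizingSet(p) satisfies H(C) ≥ H(G′); hence G′ is a minimum entropy coupling of MajorizingSet(p). -/
open Finset Real

/-- `q` is a member of `MajorizingSet p`: a sorted distribution on `n` states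
whose prefix sums dominate those of `p` (i.e. `p ≼ q`). -/
def MajMem {n : ℕ} (p q : Fin n → ℝ) : Prop :=
  Antitone q ∧ (∀ k, 0 ≤ q k) ∧ (∑ k, q k = 1) ∧
    ∀ i : Fin n, ∑ j ∈ Finset.Iic i, p j ≤ ∑ j ∈ Finset.Iic i, q j

/-- The distribution `C` couples the distribution `q` on `n` states. -/
def Couples {n : ℕ} (C : ℕ → ℝ) (q : Fin n → ℝ) : Prop :=
  ∃ f : ℕ → Fin n, ∀ i : Fin n, ∑' j : {j : ℕ // f j = i}, C j.1 = q i


/-!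
Write `g t = max_j (∑_{k ≤ j} p k - t) / (j + 1)`, so that `G' i = g (G' 0 + ⋯ + G' (i-1))`.

If `C` couples `MajorizingSet p` and `u = C 0 + ⋯ + C (m-1)`, then `C m ≤ g u`: otherwise the
member `(u + g u, g u, g u, …)` (cut off at total mass `1`) of `MajorizingSet p` has only one
state able to hold any of `C 0, …, C m`, and that state is too small for all of them. As
`t ↦ t + g t` is monotone, induction shows that `G'` majorizes `C`, and Schur-concavity of
entropy (tangent lines of `x ↦ -x log x` plus summation by parts) gives `H(G') ≤ H(C)`.

Conversely `G'` couples every `q` in `MajorizingSet p`: putting each `G' i` into a state of `q`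
with largest remaining mass always fits, because the prefix sums of `q` dominate those of `p`.
Finally `G' i` is at least a `1/n`-th of the mass still missing, so `G'` sums to `1`.
-/

open Filter Topology

lemma sum_Iic_le_one {n : ℕ} {p : Fin n → ℝ} (hpos : ∀ k, 0 ≤ p k) (hsum : ∑ k, p k = 1)
    (j : Fin n) : ∑ k ∈ Iic j, p k ≤ 1 :=
  hsum ▸ sum_le_sum_of_subset_of_nonneg (subset_univ _) fun k _ _ => hpos k

section GreedyMass

variable {n : ℕ} [NeZero n] {p : Fin n → ℝ}

noncomputable def greedyMass (p : Fin n → ℝ) (t : ℝ) : ℝ :=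
  univ.sup' univ_nonempty fun j : Fin n => ((∑ k ∈ Iic j, p k) - t) / ((j : ℝ) + 1)

lemma div_le_greedyMass (p : Fin n → ℝ) (t : ℝ) (j : Fin n) :
    ((∑ k ∈ Iic j, p k) - t) / ((j : ℝ) + 1) ≤ greedyMass p t :=
  le_sup' (fun j : Fin n => ((∑ k ∈ Iic j, p k) - t) / ((j : ℝ) + 1)) (mem_univ j)

lemma one_sub_div_le_greedyMass (hsum : ∑ k, p k = 1) (t : ℝ) :
    (1 - t) / n ≤ greedyMass p t := by
  obtain ⟨m, rfl⟩ := Nat.exists_eq_succ_of_ne_zero (NeZero.ne n)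
  have hlast : Iic (Fin.last m) = univ := eq_univ_of_forall fun k => mem_Iic.2 (Fin.le_last k)
  simpa [hlast, hsum] using div_le_greedyMass p t (Fin.last m)

lemma greedyMass_le (hpos : ∀ k, 0 ≤ p k) (hsum : ∑ k, p k = 1) {t : ℝ} (ht : t ≤ 1) :
    greedyMass p t ≤ 1 - t :=
  sup'_le _ _ fun j _ => calc
    ((∑ k ∈ Iic j, p k) - t) / ((j : ℝ) + 1) ≤ (1 - t) / ((j : ℝ) + 1) := by
      gcongr
      exact sum_Iic_le_one hpos hsum j
    _ ≤ 1 - t := div_le_self (sub_nonneg.2 ht) (by simp)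

lemma greedyMass_antitone : Antitone (greedyMass p) := fun _ _ h =>
  sup'_mono_fun fun _ _ => by gcongr

lemma monotone_add_greedyMass : Monotone fun t => t + greedyMass p t := by
  intro t t' htt'
  obtain ⟨j, -, hj⟩ := exists_mem_eq_sup' univ_nonempty
    fun j : Fin n => ((∑ k ∈ Iic j, p k) - t) / ((j : ℝ) + 1)
  have hj1 : (1 : ℝ) ≤ (j : ℝ) + 1 := by simp
  calc t + greedyMass p t = t + ((∑ k ∈ Iic j, p k) - t) / ((j : ℝ) + 1) := by rw [greedyMass, hj]
    _ ≤ t' + ((∑ k ∈ Iic j, p k) - t') / ((j : ℝ) + 1) := by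
      rw [← sub_nonneg]
      have : (t' - t) / ((j : ℝ) + 1) ≤ t' - t := div_le_self (sub_nonneg.2 htt') hj1
      field_simp at this ⊢
      linarith
    _ ≤ t' + greedyMass p t' := by gcongr; exact div_le_greedyMass p t' j

end GreedyMass

section GreedySequence

variable {n : ℕ} [NeZero n] {p : Fin n → ℝ} {G' : ℕ → ℝ}
  (hpos : ∀ k, 0 ≤ p k) (hsum : ∑ k, p k = 1)
  (hG : ∀ i, G' i = greedyMass p (∑ k ∈ range i, G' k))
include hpos hsum hG

/-- Each greedy step places between a `1/n`-th of the remaining mass and all of it. -/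
lemma one_sub_sum_range_greedy_mem_Icc (m : ℕ) :
    1 - ∑ k ∈ range m, G' k ∈ Set.Icc 0 ((1 - (n : ℝ)⁻¹) ^ m) := by
  induction m with
  | zero => simp
  | succ m ih =>
    set t := ∑ k ∈ range m, G' k
    obtain ⟨h0, h1⟩ := ih
    have hlo := one_sub_div_le_greedyMass hsum t
    have hhi := greedyMass_le hpos hsum (t := t) (by linarith)
    have hn : (1 : ℝ) ≤ n := by exact_mod_cast NeZero.one_le
    rw [sum_range_succ, ← hG m] at *
    refine ⟨by linarith, ?_⟩
    calc 1 - (t + G' m) ≤ (1 - t) * (1 - (n : ℝ)⁻¹) := by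
          rw [mul_one_sub, ← div_eq_mul_inv]; linarith
      _ ≤ (1 - (n : ℝ)⁻¹) ^ m * (1 - (n : ℝ)⁻¹) :=
          mul_le_mul_of_nonneg_right h1 (sub_nonneg.2 (inv_le_one_of_one_le₀ hn))
      _ = (1 - (n : ℝ)⁻¹) ^ (m + 1) := (pow_succ _ _).symm

lemma greedy_nonneg (i : ℕ) : 0 ≤ G' i := by
  rw [hG i]
  exact (div_nonneg (one_sub_sum_range_greedy_mem_Icc hpos hsum hG i).1 (Nat.cast_nonneg n)).trans
    (one_sub_div_le_greedyMass hsum _)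

lemma greedy_antitone : Antitone G' := by
  refine antitone_nat_of_succ_le fun m => ?_
  rw [hG m, hG (m + 1), sum_range_succ]
  exact greedyMass_antitone (le_add_of_nonneg_right (hG m ▸ greedy_nonneg hpos hsum hG m))

lemma tendsto_sum_range_greedy : Tendsto (fun m => ∑ k ∈ range m, G' k) atTop (𝓝 1) := by
  have hn : (1 : ℝ) ≤ n := by exact_mod_cast NeZero.one_le
  have hgeom : Tendsto (fun m => 1 - (1 - (n : ℝ)⁻¹) ^ m) atTop (𝓝 1) := by
    simpa using tendsto_const_nhds.sub (tendsto_pow_atTop_nhds_zero_of_lt_one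
      (sub_nonneg.2 (inv_le_one_of_one_le₀ hn)) (sub_lt_self 1 (by positivity)))
  refine tendsto_of_tendsto_of_tendsto_of_le_of_le hgeom tendsto_const_nhds
    (fun m => ?_) fun m => ?_
  · linarith [(one_sub_sum_range_greedy_mem_Icc hpos hsum hG m).2]
  · linarith [(one_sub_sum_range_greedy_mem_Icc hpos hsum hG m).1]

lemma greedy_hasSum : HasSum G' 1 :=
  (hasSum_iff_tendsto_nat_of_nonneg (greedy_nonneg hpos hsum hG) 1).2
    (tendsto_sum_range_greedy hpos hsum hG)

end GreedySequence

section BinPacking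

variable {n : ℕ} [NeZero n] (q : Fin n → ℝ) (a : ℕ → ℝ)

noncomputable def fullestBin (v : Fin n → ℝ) : Fin n := (Finite.exists_max v).choose

lemma le_fullestBin (v : Fin n → ℝ) (k : Fin n) : v k ≤ v (fullestBin v) :=
  (Finite.exists_max v).choose_spec k

/-- The capacities left in the bins `q` once the items `a 0, …, a (i - 1)` have been put,
one after the other, each into a bin of largest remaining capacity. -/
noncomputable def binResidual : ℕ → Fin n → ℝ
  | 0 => q
  | i + 1 => binResidual i - Pi.single (fullestBin (binResidual i)) (a i)

lemma binResidual_succ (i : ℕ) :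
    binResidual q a (i + 1) =
      binResidual q a i - Pi.single (fullestBin (binResidual q a i)) (a i) :=
  rfl

lemma sum_binResidual (i : ℕ) : ∑ k, binResidual q a i k = ∑ k, q k - ∑ j ∈ range i, a j := by
  induction i with
  | zero => simp [binResidual]
  | succ i ih => simp [binResidual_succ, sum_sub_distrib, ih, sum_range_succ, sub_sub]

variable {q a}

lemma couples_of_binResidual_nonneg (ha : ∀ i, 0 ≤ a i) (hr : ∀ i k, 0 ≤ binResidual q a i k)
    (htend : Tendsto (fun i => ∑ j ∈ range i, a j) atTop (𝓝 (∑ k, q k))) : Couples a q := by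
  set r := binResidual q a
  refine ⟨fun j => fullestBin (r j), fun k => ?_⟩
  set placed : ℕ → ℝ := fun j => (Pi.single (fullestBin (r j)) (a j) : Fin n → ℝ) k
  have hplaced : ∀ i, ∑ j ∈ range i, placed j = q k - r i k := fun i => by
    have hstep : ∀ j, placed j = r j k - r (j + 1) k := fun j => by
      simp [placed, r, binResidual_succ]
    simp_rw [hstep, sum_range_sub']
    rfl
  have hr_tend : Tendsto (fun i => r i k) atTop (𝓝 0) := by
    refine tendsto_of_tendsto_of_tendsto_of_le_of_le tendsto_const_nhds
      (by simpa using (tendsto_const_nhds (x := ∑ k, q k)).sub htend) (fun i => hr i k) fun i => ?_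
    rw [← sum_binResidual]
    exact single_le_sum (fun k _ => hr i k) (mem_univ k)
  have hsum : HasSum placed (q k) := by
    refine (hasSum_iff_tendsto_nat_of_nonneg (fun j => ?_) _).2 ?_
    · by_cases h : k = fullestBin (r j) <;> simp [placed, Pi.single_apply, h, ha j]
    · simpa [hplaced] using tendsto_const_nhds.sub hr_tend
  calc ∑' j : {j // fullestBin (r j) = k}, a j
      = ∑' j, Set.indicator {j | fullestBin (r j) = k} a j := tsum_subtype _ a
    _ = ∑' j, placed j := by
      congr 1; ext j; simp [placed, Set.indicator_apply, Pi.single_apply, eq_comm]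
    _ = q k := hsum.tsum_eq

end BinPacking

section GreedyCouples

variable {n : ℕ} [NeZero n] {p q : Fin n → ℝ} {G' : ℕ → ℝ}
  (hpos : ∀ k, 0 ≤ p k) (hsum : ∑ k, p k = 1)
  (hG : ∀ i, G' i = greedyMass p (∑ k ∈ range i, G' k))
include hpos hsum hG

/-- The first `j + 1` bins keep enough capacity for the part of `p`'s first `j + 1` masses
not yet covered, so the average, hence the largest, residual is at least the next greedy item. -/
lemma binResidual_greedy_invariant (hq0 : ∀ k, 0 ≤ q k)
    (hpq : ∀ j, ∑ k ∈ Iic j, p k ≤ ∑ k ∈ Iic j, q k) (i : ℕ) :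
    (∀ k, 0 ≤ binResidual q G' i k) ∧
      ∀ j, ∑ k ∈ Iic j, p k - ∑ k ∈ range i, G' k ≤ ∑ k ∈ Iic j, binResidual q G' i k := by
  induction i with
  | zero => simpa [binResidual] using ⟨hq0, hpq⟩
  | succ i ih =>
    obtain ⟨hr0, hcover⟩ := ih
    set r := binResidual q G' i
    set b := fullestBin r
    have hfits : G' i ≤ r b := by
      rw [hG i]
      refine sup'_le _ _ fun j _ => (div_le_iff₀ (by positivity)).2 ?_
      calc ∑ k ∈ Iic j, p k - ∑ k ∈ range i, G' k ≤ ∑ k ∈ Iic j, r k := hcover j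
        _ ≤ #(Iic j) • r b := sum_le_card_nsmul _ _ _ fun k _ => le_fullestBin r k
        _ = r b * ((j : ℝ) + 1) := by simp [mul_comm]
    have hG0 := greedy_nonneg hpos hsum hG i
    refine ⟨fun k => ?_, fun j => ?_⟩
    · by_cases hk : k = b
      · subst hk; simpa [binResidual_succ, r, b] using hfits
      · simpa [binResidual_succ, r, b, Pi.single_apply, hk] using hr0 k
    · have hsingle : ∑ k ∈ Iic j, Pi.single b (G' i) k ≤ G' i := by
        rw [sum_pi_single']; split_ifs <;> simp [hG0]
      rw [binResidual_succ, sum_range_succ]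
      simp only [Pi.sub_apply, sum_sub_distrib]
      linarith [hcover j]

lemma couples_greedy (hq : MajMem p q) : Couples G' q :=
  couples_of_binResidual_nonneg (greedy_nonneg hpos hsum hG)
    (fun i => (binResidual_greedy_invariant hpos hsum hG hq.2.1 hq.2.2.2 i).1)
    (hq.2.2.1 ▸ tendsto_sum_range_greedy hpos hsum hG)

end GreedyCouples

section LowerBound

/-- The profile `(u + d, d, d, …)`, cut off once its total reaches `1`. -/
noncomputable def truncatedProfile (u d : ℝ) (k : ℕ) : ℝ :=
  if k = 0 then u + d else min d (max 0 (1 - (u + k * d)))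

variable {u d : ℝ}

lemma truncatedProfile_nonneg (hu : 0 ≤ u) (hd : 0 ≤ d) (k : ℕ) : 0 ≤ truncatedProfile u d k := by
  unfold truncatedProfile; split_ifs <;> positivity

lemma truncatedProfile_le {k : ℕ} (hk : k ≠ 0) : truncatedProfile u d k ≤ d := by
  simp [truncatedProfile, hk]

lemma truncatedProfile_antitone (hu : 0 ≤ u) (hd : 0 ≤ d) : Antitone (truncatedProfile u d) := by
  refine antitone_nat_of_succ_le fun k => ?_
  rcases Nat.eq_zero_or_pos k with rfl | hk
  · show truncatedProfile u d 1 ≤ truncatedProfile u d 0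
    rw [truncatedProfile, truncatedProfile, if_neg one_ne_zero, if_pos rfl]
    exact (min_le_left _ _).trans (le_add_of_nonneg_left hu)
  · rw [truncatedProfile, truncatedProfile, if_neg k.succ_ne_zero, if_neg hk.ne']
    gcongr
    exact_mod_cast k.le_succ

lemma min_add_one_eq_add_min (x : ℝ) (hd : 0 ≤ d) :
    min (x + d) 1 = min x 1 + min d (max 0 (1 - x)) := by
  rcases le_total x 1 with h | h <;> rcases le_total (x + d) 1 with h' | h' <;>
    simp only [min_def, max_def] <;> split_ifs <;> linarith

lemma sum_range_truncatedProfile (hd : 0 ≤ d) (hud : u + d ≤ 1) (m : ℕ) :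
    ∑ k ∈ range (m + 1), truncatedProfile u d k = min (u + (m + 1) * d) 1 := by
  induction m with
  | zero => simp [truncatedProfile, hud]
  | succ m ih =>
    rw [sum_range_succ, ih, truncatedProfile, if_neg m.succ_ne_zero]
    push_cast
    rw [← min_add_one_eq_add_min _ hd]
    ring_nf

variable {n : ℕ} [NeZero n] {p : Fin n → ℝ}

lemma majMem_truncatedProfile (hu : 0 ≤ u) (hd : 0 ≤ d) (hud : u + d ≤ 1)
    (hmass : 1 ≤ u + n * d) (hp : ∀ j : Fin n, ∑ k ∈ Iic j, p k ≤ min (u + (j + 1) * d) 1) :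
    MajMem p fun k : Fin n => truncatedProfile u d k := by
  have hIic : ∀ j : Fin n, ∑ k ∈ Iic j, truncatedProfile u d k = min (u + (j + 1) * d) 1 := by
    intro j
    rw [← sum_range_truncatedProfile hd hud, Nat.range_succ_eq_Iic, ← Fin.map_valEmbedding_Iic,
      sum_map]
    rfl
  refine ⟨fun k l hkl => truncatedProfile_antitone hu hd hkl,
    fun k => truncatedProfile_nonneg hu hd k, ?_, fun j => hIic j ▸ hp j⟩
  obtain ⟨m, rfl⟩ := Nat.exists_eq_succ_of_ne_zero (NeZero.ne n)
  rw [Fin.sum_univ_eq_sum_range (truncatedProfile u d), sum_range_truncatedProfile hd hud]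
  push_cast at hmass ⊢
  exact min_eq_right hmass

lemma le_greedyMass_of_couples (hpos : ∀ k, 0 ≤ p k) (hsum : ∑ k, p k = 1) {C : ℕ → ℝ}
    (hCanti : Antitone C) (hC0 : ∀ j, 0 ≤ C j) (hC1 : HasSum C 1)
    (hcoup : ∀ q, MajMem p q → Couples C q) (m : ℕ) :
    C m ≤ greedyMass p (∑ j ∈ range m, C j) := by
  set u := ∑ j ∈ range m, C j
  by_contra! hlt
  have hu0 : 0 ≤ u := sum_nonneg fun j _ => hC0 j
  have hu1 : u + C m ≤ 1 := by
    rw [← sum_range_succ, ← hC1.tsum_eq]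
    exact hC1.summable.sum_le_tsum _ fun j _ => hC0 j
  have hlo := one_sub_div_le_greedyMass hsum u
  have hg0 : 0 ≤ greedyMass p u := le_trans (div_nonneg (by linarith [hC0 m]) (by positivity)) hlo
  have hug : u + greedyMass p u ≤ 1 := by linarith [greedyMass_le hpos hsum (t := u) (by linarith)]
  have hmass : 1 ≤ u + n * greedyMass p u := by
    rw [div_le_iff₀ (Nat.cast_pos.2 (NeZero.pos n))] at hlo; linarith
  have hp : ∀ j : Fin n, ∑ k ∈ Iic j, p k ≤ min (u + (j + 1) * greedyMass p u) 1 := fun j => by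
    refine le_min ?_ (sum_Iic_le_one hpos hsum j)
    have := div_le_greedyMass p u j
    rw [div_le_iff₀ (by positivity)] at this
    linarith
  obtain ⟨f, hf⟩ := hcoup _ (majMem_truncatedProfile hu0 hg0 hug hmass hp)
  -- each of `C 0, …, C m` is too large for every bin but the first
  have hfirst : ∀ k ≤ m, f k = 0 := by
    intro k hk
    by_contra hne
    have hCk : C k ≤ truncatedProfile u (greedyMass p u) (f k) :=
      ((hC1.summable.subtype {j | f j = f k}).le_tsum ⟨k, rfl⟩ fun j _ => hC0 j.1).trans_eq
        (hf (f k))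
    linarith [hCanti hk,
      truncatedProfile_le (u := u) (d := greedyMass p u) (Fin.val_ne_zero_iff.2 hne)]
  have : u + C m ≤ u + greedyMass p u := calc
    u + C m = ∑ j ∈ range (m + 1), Set.indicator {j | f j = 0} C j :=
      (sum_range_succ C m).symm.trans <| sum_congr rfl fun j hj =>
        (Set.indicator_of_mem (s := {j | f j = 0})
          (hfirst j (Nat.lt_succ_iff.1 (mem_range.1 hj))) C).symm
    _ ≤ ∑' j, Set.indicator {j | f j = 0} C j :=
      (hC1.summable.indicator _).sum_le_tsum _ fun j _ => Set.indicator_nonneg (fun j _ => hC0 j) j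
    _ = u + greedyMass p u := by
      rw [← _root_.tsum_subtype]; exact (hf 0).trans (by simp [truncatedProfile])
  linarith

end LowerBound

lemma sum_range_le_sum_range_greedy {n : ℕ} [NeZero n] {p : Fin n → ℝ} {G' C : ℕ → ℝ}
    (hpos : ∀ k, 0 ≤ p k) (hsum : ∑ k, p k = 1)
    (hG : ∀ i, G' i = greedyMass p (∑ k ∈ range i, G' k))
    (hCanti : Antitone C) (hC0 : ∀ j, 0 ≤ C j) (hC1 : HasSum C 1)
    (hcoup : ∀ q, MajMem p q → Couples C q) (m : ℕ) :
    ∑ j ∈ range m, C j ≤ ∑ j ∈ range m, G' j := by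
  induction m with
  | zero => simp
  | succ m ih =>
    rw [sum_range_succ, sum_range_succ, hG m]
    linarith [le_greedyMass_of_couples hpos hsum hCanti hC0 hC1 hcoup m,
      monotone_add_greedyMass (p := p) ih]

lemma negMulLog_le_tangent {c y : ℝ} (hc : 0 < c) (hy : 0 ≤ y) :
    negMulLog y ≤ negMulLog c + (-log c - 1) * (y - c) := by
  have h := mul_le_mul_of_nonneg_left (self_sub_one_le_mul_log (div_nonneg hy hc.le)) hc.le
  have hlog : y * log (y / c) = y * log y - y * log c := by
    rcases hy.eq_or_lt with rfl | hy
    · simp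
    · rw [log_div hy.ne' hc.ne']; ring
  rw [mul_sub, mul_one, mul_div_cancel₀ _ hc.ne', ← mul_assoc, mul_div_cancel₀ _ hc.ne', hlog] at h
  simp only [negMulLog]
  linarith

lemma mul_neg_log_le_negMulLog {x y : ℝ} (hx : 0 ≤ x) (hxy : x ≤ y) : x * -log y ≤ negMulLog x := by
  rw [negMulLog, neg_mul, ← mul_neg]
  rcases hx.eq_or_lt with rfl | hx
  · simp
  · exact mul_le_mul_of_nonneg_left (neg_le_neg (log_le_log hx hxy)) hx.le

/-- Summation by parts, for weights that increase wherever the partial sums are nonzero. -/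
lemma sum_range_mul_le {v a : ℕ → ℝ}
    (hv : ∀ i, v i * ∑ j ∈ range (i + 1), a j ≤ v (i + 1) * ∑ j ∈ range (i + 1), a j) (N : ℕ) :
    ∑ i ∈ range (N + 1), v i * a i ≤ v N * ∑ i ∈ range (N + 1), a i := by
  induction N with
  | zero => simp
  | succ N ih =>
    rw [sum_range_succ, sum_range_succ a (N + 1), mul_add]
    linarith [hv N]

lemma neg_log_mul_tsum_le_tsum_negMulLog {C : ℕ → ℝ} (hCanti : Antitone C) (hC0 : ∀ j, 0 ≤ C j)
    (hC : Summable C) (hL : Summable fun j => negMulLog (C j)) {N M : ℕ} (hNM : N ≤ M) :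
    -log (C N) * ∑' i, C (i + M) ≤ ∑' i, negMulLog (C (i + M)) := by
  have hle : ∀ i, -log (C N) * C (i + M) ≤ negMulLog (C (i + M)) := fun i => by
    rw [mul_comm]
    exact mul_neg_log_le_negMulLog (hC0 _) (hCanti (hNM.trans (M.le_add_left i)))
  rw [← tsum_mul_left]
  exact (((summable_nat_add_iff M).2 hC).mul_left _).tsum_le_tsum hle
    ((summable_nat_add_iff (f := fun j => negMulLog (C j)) M).2 hL)

section Majorization

variable {C G : ℕ → ℝ} (hCanti : Antitone C) (hC0 : ∀ j, 0 ≤ C j) (hC1 : HasSum C 1)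
  (hG0 : ∀ j, 0 ≤ G j) (hG1 : HasSum G 1) (hCG : ∀ m, ∑ j ∈ range m, C j ≤ ∑ j ∈ range m, G j)

include hC1 hG0 hG1 in
lemma sum_range_sub_sum_range_le_tsum (m : ℕ) :
    ∑ j ∈ range m, G j - ∑ j ∈ range m, C j ≤ ∑' i, C (i + m) := by
  have hCsplit := hC1.summable.sum_add_tsum_nat_add m
  have hGle := hG1.summable.sum_le_tsum (range m) fun j _ => hG0 j
  rw [hC1.tsum_eq] at hCsplit
  rw [hG1.tsum_eq] at hGle
  linarith

include hCanti hC0 hC1 hG0 hG1 hCG in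
lemma sum_range_eq_sum_range_of_eq_zero {m : ℕ} (hm : C m = 0) :
    ∑ j ∈ range m, G j = ∑ j ∈ range m, C j := by
  have htail : ∑' i, C (i + m) = 0 := by
    rw [tsum_congr fun i => le_antisymm (hm ▸ hCanti (m.le_add_left i)) (hC0 _), tsum_zero]
  linarith [sum_range_sub_sum_range_le_tsum hC1 hG0 hG1 m, hCG m]

variable {L : ℝ} (hL : HasSum (fun j => negMulLog (C j)) L)
include hCanti hC0 hC1 hG0 hG1 hCG hL

lemma sum_range_negMulLog_le (N : ℕ) : ∑ j ∈ range (N + 1), negMulLog (G j) ≤ L := by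
  set A : ℕ → ℝ := fun m => ∑ j ∈ range m, G j - ∑ j ∈ range m, C j
  have hA0 : ∀ m, 0 ≤ A m := fun m => sub_nonneg.2 (hCG m)
  have hA_zero : ∀ m, C m = 0 → A m = 0 := fun m hm =>
    sub_eq_zero.2 (sum_range_eq_sum_range_of_eq_zero hCanti hC0 hC1 hG0 hG1 hCG hm)
  -- past a zero of `C`, `G` is exhausted too
  have hG_zero : ∀ m, C m = 0 → G m = 0 := fun m hm => by
    have h1 := hA_zero (m + 1) (le_antisymm (hm ▸ hCanti m.le_succ) (hC0 _))
    have h0 := hA_zero m hm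
    simp only [A, sum_range_succ] at h0 h1
    linarith
  set v : ℕ → ℝ := fun j => -log (C j)
  have htangent : ∀ j, negMulLog (G j) ≤ negMulLog (C j) + (v j - 1) * (G j - C j) := fun j => by
    rcases (hC0 j).eq_or_lt with hj | hj
    · simp [← hj, hG_zero j hj.symm]
    · exact negMulLog_le_tangent hj (hG0 j)
  have hparts : ∑ j ∈ range (N + 1), v j * (G j - C j) ≤ v N * A (N + 1) := by
    refine (sum_range_mul_le (fun i => ?_) N).trans_eq (by rw [sum_sub_distrib])
    rw [sum_sub_distrib]
    rcases (hC0 (i + 1)).eq_or_lt with hi | hi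
    · have h0 := hA_zero (i + 1) hi.symm
      simp only [A] at h0
      simp [h0]
    · exact mul_le_mul_of_nonneg_right (neg_le_neg (log_le_log hi (hCanti i.le_succ))) (hA0 _)
  have htail : v N * A (N + 1) ≤ ∑' i, negMulLog (C (i + (N + 1))) := calc
    v N * A (N + 1) ≤ v N * ∑' i, C (i + (N + 1)) :=
      mul_le_mul_of_nonneg_left (sum_range_sub_sum_range_le_tsum hC1 hG0 hG1 _)
        (neg_nonneg.2 (log_nonpos (hC0 N) (le_hasSum hC1 N fun k _ => hC0 k)))
    _ ≤ _ := neg_log_mul_tsum_le_tsum_negMulLog hCanti hC0 hC1.summable hL.summable N.le_succ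
  calc ∑ j ∈ range (N + 1), negMulLog (G j)
      ≤ ∑ j ∈ range (N + 1), (negMulLog (C j) + (v j * (G j - C j) - (G j - C j))) :=
        sum_le_sum fun j _ => (htangent j).trans_eq (by ring)
    _ = ∑ j ∈ range (N + 1), negMulLog (C j) + ∑ j ∈ range (N + 1), v j * (G j - C j)
          - A (N + 1) := by simp only [A, sum_add_distrib, sum_sub_distrib]; ring
    _ ≤ ∑ j ∈ range (N + 1), negMulLog (C j) + ∑' i, negMulLog (C (i + (N + 1))) := by
        linarith [hA0 (N + 1)]
    _ = L := by rw [hL.summable.sum_add_tsum_nat_add, hL.tsum_eq]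

theorem tsum_negMulLog_le_of_sum_range_le : ∑' j, negMulLog (G j) ≤ L := by
  have hnonneg : ∀ j, 0 ≤ negMulLog (G j) := fun j =>
    negMulLog_nonneg (hG0 j) (le_hasSum hG1 j fun k _ => hG0 k)
  refine tsum_le_of_sum_range_le hnonneg fun N => ?_
  exact (sum_le_sum_of_subset_of_nonneg (range_mono N.le_succ) fun j _ _ => hnonneg j).trans
    (sum_range_negMulLog_le hCanti hC0 hC1 hG0 hG1 hCG hL N)

end Majorization

lemma mul_logb_inv_eq_negMulLog_div (x : ℝ) : x * logb 2 x⁻¹ = negMulLog x / log 2 := by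
  rw [logb, log_inv, negMulLog]; ring

theorem greedy_optimal_for_majorizing_set_general
    (n : ℕ) [NeZero n] (p : Fin n → ℝ)
    (hpos : ∀ k, 0 ≤ p k) (hsum : ∑ k, p k = 1)
    (G' : ℕ → ℝ)
    (hG' : ∀ i, G' i = univ.sup' univ_nonempty fun j : Fin n =>
      ((∑ k ∈ Iic j, p k) - ∑ k ∈ Finset.range i, G' k) / ((j : ℝ) + 1)) :
    (∀ i, 0 ≤ G' i) ∧ Antitone G' ∧ HasSum G' 1 ∧
    (∀ q : Fin n → ℝ, MajMem p q → Couples G' q) ∧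
    (∀ C : ℕ → ℝ, Antitone C → (∀ j, 0 ≤ C j) → HasSum C 1 →
      (∀ q : Fin n → ℝ, MajMem p q → Couples C q) →
      ∀ x : ℝ, HasSum (fun j => C j * Real.logb 2 (C j)⁻¹) x →
        (∑' i : ℕ, G' i * Real.logb 2 (G' i)⁻¹) ≤ x) := by
  have hG : ∀ i, G' i = greedyMass p (∑ k ∈ range i, G' k) := hG'
  have hG0 := greedy_nonneg hpos hsum hG
  have hG1 := greedy_hasSum hpos hsum hG
  refine ⟨hG0, greedy_antitone hpos hsum hG, hG1, fun q hq => couples_greedy hpos hsum hG hq, ?_⟩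
  intro C hCanti hC0 hC1 hcoup x hx
  have hlog2 : 0 < log 2 := log_pos one_lt_two
  have hL : HasSum (fun j => negMulLog (C j)) (x * log 2) := by
    simpa only [mul_logb_inv_eq_negMulLog_div, div_mul_cancel₀ _ hlog2.ne'] using
      hx.mul_right (log 2)
  simp_rw [mul_logb_inv_eq_negMulLog_div, tsum_div_const]
  rw [div_le_iff₀ hlog2]
  exact tsum_negMulLog_le_of_sum_range_le hCanti hC0 hC1 hG0 hG1
    (sum_range_le_sum_range_greedy hpos hsum hG hCanti hC0 hC1 hcoup) hL

/-- **Theorem 2 (greedy is optimal for majorizing sets).**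
Let `p` be a sorted distribution on `n` states and let `G'` satisfy the recursion
`G' i = max_{1≤j≤n} (∑_{k=1}^{j} p k − ∑_{k<i} G' k)/j`.  Then `G'` is a probability
distribution that couples every member of `MajorizingSet p`, and every distribution `C`
coupling `MajorizingSet p` has entropy `H(C) ≥ H(G')`
(the entropy of `C` is expressed through `HasSum`, so that distributions with divergent,
i.e. infinite, entropy satisfy the claim vacuously). -/
theorem greedy_optimal_for_majorizing_set
    (n : ℕ) [NeZero n] (p : Fin n → ℝ)
    (hsort : Antitone p) (hpos : ∀ k, 0 ≤ p k) (hsum : ∑ k, p k = 1)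
    (G' : ℕ → ℝ)
    (hG' : ∀ i, G' i = univ.sup' univ_nonempty fun j : Fin n =>
      ((∑ k ∈ Iic j, p k) - ∑ k ∈ Finset.range i, G' k) / ((j : ℝ) + 1)) :
    (∀ i, 0 ≤ G' i) ∧ Antitone G' ∧ HasSum G' 1 ∧
    (∀ q : Fin n → ℝ, MajMem p q → Couples G' q) ∧
    (∀ C : ℕ → ℝ, Antitone C → (∀ j, 0 ≤ C j) → HasSum C 1 →
      (∀ q : Fin n → ℝ, MajMem p q → Couples C q) →
      ∀ x : ℝ, HasSum (fun j => C j * Real.logb 2 (C j)⁻¹) x →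
        (∑' i : ℕ, G' i * Real.logb 2 (G' i)⁻¹) ≤ x) :=
  greedy_optimal_for_majorizing_set_general n p hpos hsum G' hG'
end

section
/- Let p be a probability distribution on n states with values sorted nonincreasingly, and let G′ be the sequence defined recursively by G′(i) = max_{1≤j≤n} (∑_{k=1}^{j} p(k) − ∑_{k=1}^{i−1} G′(k)) / j. If a distribution C couples MajorizingSet(p), then C ≼ G′, i.e., ∑_{k=1}^{i} C(k) ≤ ∑_{k=1}^{i} G′(k) for every i (with C's values sorted nonincreasingly). -/
open Finset Real

/-!
Write `T = ∑_{k<i} C k` and `P j = ∑_{k≤j} p k`. The heart of the proof is that for every `i`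
some state `j` satisfies `T + (j + 1) C i ≤ P j`. If not, every `P j` lies strictly below
`T + (j + 1) x` for some `x < C i`, so the distribution putting `T + x` on state `0` and `x` on
each later state (until the mass runs out) majorizes `p`. A coupling of it by `C` must send each
of `C 0, …, C i` (all `≥ C i > x`) into state `0`, which is impossible as they weigh `T + C i`.
Given such a `j`, the recursion for `G'` yields `G' i ≥ (P j - ∑_{k<i} G' k) / (j + 1)`, and the
claim follows by induction on `i`.
-/

lemma Fin.sum_Iic_val {M : Type*} [AddCommMonoid M] {n : ℕ} (j : Fin n) (f : ℕ → M) :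
    ∑ k ∈ Iic j, f k = ∑ k ∈ range (j + 1), f k := by
  rw [Nat.range_succ_eq_Iic, ← Fin.map_valEmbedding_Iic, sum_map]
  rfl

/-- For `0 ≤ T ≤ 1` and `0 ≤ x`: mass `T + x` on state `0`, then mass `x` on each further state
until the total reaches `1`. -/
noncomputable def stepDist (T x : ℝ) (k : ℕ) : ℝ :=
  (if k = 0 then T else 0) + max 0 (min x (1 - T - k * x))

section stepDist

variable {T x : ℝ}

lemma stepDist_nonneg (hT : 0 ≤ T) (k : ℕ) : 0 ≤ stepDist T x k := by
  unfold stepDist; split_ifs <;> positivity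

lemma stepDist_antitone (hT : 0 ≤ T) (hx : 0 ≤ x) : Antitone (stepDist T x) := by
  intro a b hab
  have hind : (if b = 0 then T else 0) ≤ if a = 0 then T else 0 := by
    split_ifs with hb ha ha
    · exact le_rfl
    · omega
    · exact hT
    · exact le_rfl
  have hclip : 1 - T - b * x ≤ 1 - T - a * x := by gcongr
  exact add_le_add hind (max_le_max le_rfl (min_le_min le_rfl hclip))

lemma stepDist_zero_le (hx : 0 ≤ x) : stepDist T x 0 ≤ T + x := by
  simp only [stepDist, if_true]
  gcongr
  exact max_le hx (min_le_left _ _)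

lemma stepDist_le_of_ne_zero (hx : 0 ≤ x) {k : ℕ} (hk : k ≠ 0) : stepDist T x k ≤ x := by
  simp only [stepDist, hk, if_false, zero_add]
  exact max_le hx (min_le_left _ _)

lemma min_add_max_zero_min (hx : 0 ≤ x) (u : ℝ) :
    min u 1 + max 0 (min x (1 - u)) = min (u + x) 1 := by
  rcases le_total u 1 with hu | hu
  · rw [min_eq_left hu, max_eq_right (le_min hx (by linarith))]
    rcases le_total x (1 - u) with h | h
    · rw [min_eq_left h, min_eq_left (by linarith)]
    · rw [min_eq_right h, min_eq_right (by linarith)]; ring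
  · rw [min_eq_right hu, max_eq_left (min_le_of_right_le (by linarith)),
      min_eq_right (by linarith)]
    ring

lemma sum_range_succ_stepDist (hT : T ≤ 1) (hx : 0 ≤ x) (j : ℕ) :
    ∑ k ∈ range (j + 1), stepDist T x k = min (T + (j + 1) * x) 1 := by
  induction j with
  | zero =>
    simp only [zero_add, sum_range_one, stepDist, if_true, CharP.cast_eq_zero, zero_mul,
      sub_zero, one_mul]
    rw [← min_add_max_zero_min hx T, min_eq_left hT]
  | succ j ih =>
    rw [sum_range_succ, ih, stepDist, if_neg j.succ_ne_zero, zero_add, sub_sub, Nat.cast_succ,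
      min_add_max_zero_min hx]
    ring_nf

lemma majMem_stepDist {n : ℕ} [NeZero n] {p : Fin n → ℝ} (hT0 : 0 ≤ T) (hT1 : T ≤ 1)
    (hx : 0 ≤ x) (hp : ∑ k, p k = 1)
    (hpx : ∀ j : Fin n, ∑ k ∈ Iic j, p k ≤ min (T + (j + 1) * x) 1) :
    MajMem p fun k => stepDist T x k := by
  have hprefix : ∀ j : Fin n, ∑ k ∈ Iic j, stepDist T x k = min (T + (j + 1) * x) 1 :=
    fun j => (Fin.sum_Iic_val j _).trans (sum_range_succ_stepDist hT1 hx j)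
  refine ⟨fun a b hab => stepDist_antitone hT0 hx hab, fun k => stepDist_nonneg hT0 k, ?_,
    fun j => (hpx j).trans (hprefix j).ge⟩
  rw [← Iic_top, hprefix]
  have := hpx ⊤
  rw [Iic_top, hp] at this
  exact le_antisymm (min_le_right _ _) this

end stepDist

lemma Couples.sum_le {n : ℕ} {C : ℕ → ℝ} {q : Fin n → ℝ} (h : Couples C q) (hC : ∀ j, 0 ≤ C j)
    (hCs : Summable C) {S : Finset ℕ} {a : Fin n} (hS : ∀ k ∈ S, ∀ b ≠ a, q b < C k) :
    ∑ k ∈ S, C k ≤ q a := by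
  obtain ⟨f, hf⟩ := h
  have hfiber : ∀ k, C k ≤ q (f k) := fun k =>
    hf (f k) ▸ (hCs.subtype _).le_tsum (⟨k, rfl⟩ : {j // f j = f k}) fun _ _ => hC _
  have hSa : ∀ k ∈ S, f k = a := fun k hk =>
    by_contra fun hne => (hS k hk (f k) hne).not_ge (hfiber k)
  rw [← sum_subtype_of_mem C hSa, ← hf a]
  exact (hCs.subtype _).sum_le_tsum _ fun _ _ => hC _

lemma exists_sum_range_add_mul_le_of_couples {n : ℕ} [NeZero n] {p : Fin n → ℝ}
    (hpos : ∀ k, 0 ≤ p k) (hsum : ∑ k, p k = 1) {C : ℕ → ℝ} (hCsort : Antitone C)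
    (hCpos : ∀ j, 0 ≤ C j) (hCsum : HasSum C 1)
    (hCcouples : ∀ q : Fin n → ℝ, MajMem p q → Couples C q) (i : ℕ) :
    ∃ j : Fin n, ∑ k ∈ range i, C k + (j + 1) * C i ≤ ∑ k ∈ Iic j, p k := by
  by_contra! hcon
  set T := ∑ k ∈ range i, C k
  have hT0 : 0 ≤ T := sum_nonneg fun k _ => hCpos k
  have hT1 : T ≤ 1 := sum_le_hasSum _ (fun k _ => hCpos k) hCsum
  have hP1 : ∀ j : Fin n, ∑ k ∈ Iic j, p k ≤ 1 := fun j =>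
    hsum ▸ sum_le_sum_of_subset_of_nonneg (subset_univ _) fun k _ _ => hpos k
  set a := univ.sup' univ_nonempty fun j : Fin n => (∑ k ∈ Iic j, p k - T) / (j + 1)
  have ha0 : 0 ≤ a := by
    refine le_sup'_of_le _ (mem_univ ⊤) ?_
    rw [Iic_top, hsum]
    exact div_nonneg (by linarith) (by positivity)
  have hac : a < C i := (sup'_lt_iff _).2 fun j _ =>
    (div_lt_iff₀ (by positivity)).2 (by linarith [hcon j])
  obtain ⟨x, hax, hxc⟩ := exists_between hac
  have hx : 0 ≤ x := ha0.trans hax.le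
  have hpx : ∀ j : Fin n, ∑ k ∈ Iic j, p k ≤ T + (j + 1) * x := fun j => by
    have hj : (∑ k ∈ Iic j, p k - T) / ((j : ℝ) + 1) ≤ x :=
      (le_sup' (fun j : Fin n => (∑ k ∈ Iic j, p k - T) / ((j : ℝ) + 1)) (mem_univ j)).trans
        hax.le
    rw [div_le_iff₀ (by positivity)] at hj
    linarith
  have hmaj := majMem_stepDist hT0 hT1 hx hsum fun j => le_min (hpx j) (hP1 j)
  have hfirst := (hCcouples _ hmaj).sum_le hCpos hCsum.summable (S := range (i + 1)) (a := 0)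
    fun k hk b hb => calc
      stepDist T x b ≤ x := stepDist_le_of_ne_zero hx (Fin.val_ne_zero_iff.2 hb)
      _ < C i := hxc
      _ ≤ C k := hCsort (Nat.lt_succ_iff.1 (mem_range.1 hk))
  rw [sum_range_succ, Fin.val_zero] at hfirst
  linarith [stepDist_zero_le (T := T) hx]

theorem coupling_of_majorizing_set_is_majorized_general
    (n : ℕ) [NeZero n] (p : Fin n → ℝ)
    (hpos : ∀ k, 0 ≤ p k) (hsum : ∑ k, p k = 1)
    (G' : ℕ → ℝ)
    (hG' : ∀ i, G' i = univ.sup' univ_nonempty fun j : Fin n =>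
      ((∑ k ∈ Iic j, p k) - ∑ k ∈ Finset.range i, G' k) / ((j : ℝ) + 1))
    (C : ℕ → ℝ)
    (hCsort : Antitone C) (hCpos : ∀ j, 0 ≤ C j) (hCsum : HasSum C 1)
    (hCcouples : ∀ q : Fin n → ℝ, MajMem p q → Couples C q) :
    ∀ i : ℕ, ∑ k ∈ Finset.range i, C k ≤ ∑ k ∈ Finset.range i, G' k := by
  intro i
  induction i with
  | zero => simp
  | succ i ih =>
    obtain ⟨j, hj⟩ :=
      exists_sum_range_add_mul_le_of_couples hpos hsum hCsort hCpos hCsum hCcouples i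
    have hGj : (∑ k ∈ Iic j, p k - ∑ k ∈ range i, G' k) / ((j : ℝ) + 1) ≤ G' i :=
      (hG' i).symm ▸ le_sup'
        (fun j : Fin n => (∑ k ∈ Iic j, p k - ∑ k ∈ range i, G' k) / ((j : ℝ) + 1)) (mem_univ j)
    rw [div_le_iff₀ (by positivity)] at hGj
    rw [sum_range_succ, sum_range_succ]
    nlinarith [mul_nonneg (Nat.cast_nonneg (α := ℝ) j) (sub_nonneg.2 ih)]

/-- **Lemma 1.**  Let `p` be a sorted distribution on `n` states and `G'` satisfy the
recursion `G' i = max_{1≤j≤n} (∑_{k=1}^{j} p k − ∑_{k<i} G' k)/j`.  If a (sorted)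
distribution `C` couples every member of `MajorizingSet p`, then `C ≼ G'`:
every prefix sum of `C` is at most the corresponding prefix sum of `G'`. -/
theorem coupling_of_majorizing_set_is_majorized
    (n : ℕ) [NeZero n] (p : Fin n → ℝ)
    (hsort : Antitone p) (hpos : ∀ k, 0 ≤ p k) (hsum : ∑ k, p k = 1)
    (G' : ℕ → ℝ)
    (hG' : ∀ i, G' i = univ.sup' univ_nonempty fun j : Fin n =>
      ((∑ k ∈ Iic j, p k) - ∑ k ∈ Finset.range i, G' k) / ((j : ℝ) + 1))
    (C : ℕ → ℝ)
    (hCsort : Antitone C) (hCpos : ∀ j, 0 ≤ C j) (hCsum : HasSum C 1)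
    (hCcouples : ∀ q : Fin n → ℝ, MajMem p q → Couples C q) :
    ∀ i : ℕ, ∑ k ∈ Finset.range i, C k ≤ ∑ k ∈ Finset.range i, G' k :=
  coupling_of_majorizing_set_is_majorized_general n p hpos hsum G' hG' C hCsort hCpos hCsum
    hCcouples
end

section
/- Let M be a probability distribution on n states with values sorted nonincreasingly, and let G′ be the sequence defined recursively by G′(i) = max_{1≤j≤n} (∑_{k=1}^{j} M(k) − ∑_{k=1}^{i−1} G′(k)) / j. Fix an index i′ ≥ 1 and let j′ be a maximizer of j ↦ (∑_{k=1}^{j} M(k) − ∑_{k=1}^{i′−1} G′(k))/j over j ∈ {1,…,n}. Define p̃ on n states by p̃(1) = ∑_{ℓ=1}^{i′} G′(ℓ), p̃(k) = G′(i′) for 1 < k ≤ j′, and p̃(k) = M(k) for k > j′. Then p̃ is a valid probability distribution (all entries nonnegative and summing to 1) and M ≼ p̃, i.e., ∑_{ℓ=1}^{k} M(ℓ) ≤ ∑_{ℓ=1}^{k} p̃(ℓ) for every k ∈ {1,…,n}. -/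
open Finset Real

/-- **Claims 3–4 (the adversarial distribution `p̃`).**
Let `M` be a sorted distribution on `n` states and `G'` satisfy the recursion
`G' i = max_{1≤j≤n} (∑_{k=1}^{j} M k − ∑_{k<i} G' k)/j`.  Fix a step `i'`
(0-indexed, so the paper's `i' ≥ 1` step corresponds to prefix `range (i'+1)`) and let
`j' : Fin n` be a maximizer of `j ↦ (∑_{k=1}^{j} M k − ∑_{k<i'} G' k)/j`.
Define `p̃` by `p̃ 1 = ∑_{ℓ=1}^{i'} G' ℓ`, `p̃ k = G' i'` for `1 < k ≤ j'`, and
`p̃ k = M k` for `k > j'`.  Then `p̃` is a valid probability distribution and `M ≼ p̃`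
(prefix sums taken in the listed order). -/
theorem adversarial_distribution_valid_and_majorizes
    (n : ℕ) [NeZero n] (M : Fin n → ℝ)
    (hsort : Antitone M) (hpos : ∀ k, 0 ≤ M k) (hsum : ∑ k, M k = 1)
    (G' : ℕ → ℝ)
    (hG' : ∀ i, G' i = univ.sup' univ_nonempty fun j : Fin n =>
      ((∑ k ∈ Iic j, M k) - ∑ k ∈ Finset.range i, G' k) / ((j : ℝ) + 1))
    (i' : ℕ) (j' : Fin n)
    (hj' : ∀ j : Fin n,
      ((∑ k ∈ Iic j, M k) - ∑ k ∈ Finset.range i', G' k) / ((j : ℝ) + 1) ≤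
        ((∑ k ∈ Iic j', M k) - ∑ k ∈ Finset.range i', G' k) / ((j' : ℝ) + 1))
    (ptld : Fin n → ℝ)
    (hptld : ∀ k : Fin n, ptld k =
      if k = 0 then ∑ ℓ ∈ Finset.range (i' + 1), G' ℓ
      else if k ≤ j' then G' i'
      else M k) :
    (∀ k, 0 ≤ ptld k) ∧ (∑ k, ptld k = 1) ∧
    (∀ k : Fin n, ∑ ℓ ∈ Finset.Iic k, M ℓ ≤ ∑ ℓ ∈ Finset.Iic k, ptld ℓ) := by
  obtain ⟨m, rfl⟩ := Nat.exists_eq_succ_of_ne_zero (NeZero.ne n)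
  -- F j ≤ 1 and F last = 1
  have hFlast : ∑ k ∈ Iic (Fin.last m), M k = 1 := by
    rw [← hsum]
    congr 1
    ext ℓ
    simp [Fin.le_last]
  have hFle : ∀ j : Fin (m+1), ∑ k ∈ Iic j, M k ≤ 1 := by
    intro j
    rw [← hsum]
    exact Finset.sum_le_sum_of_subset_of_nonneg (subset_univ _) (fun k _ _ => hpos k)
  -- prefix sums of G' are ≤ 1, and G' is nonneg
  have hstep : ∀ i, (∑ k ∈ Finset.range i, G' k ≤ 1) → 0 ≤ G' i := by
    intro i hi
    rw [hG' i]
    refine le_trans ?_ (Finset.le_sup' _ (mem_univ (Fin.last m)))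
    rw [hFlast]
    apply div_nonneg (by linarith) (by positivity)
  have hprefix : ∀ i, ∑ k ∈ Finset.range i, G' k ≤ 1 := by
    intro i
    induction i with
    | zero => simp
    | succ i ih =>
      have hGnn := hstep i ih
      obtain ⟨js, _, hjs⟩ := Finset.exists_mem_eq_sup' (univ_nonempty)
        (fun j : Fin (m+1) => ((∑ k ∈ Iic j, M k) - ∑ k ∈ Finset.range i, G' k) / ((j : ℝ) + 1))
      have hGi : G' i = ((∑ k ∈ Iic js, M k) - ∑ k ∈ Finset.range i, G' k) / ((js : ℝ) + 1) := by
        rw [hG' i, hjs]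
      have h1 : (0 : ℝ) ≤ (js : ℝ) := by positivity
      have heq : G' i * ((js : ℝ) + 1) = (∑ k ∈ Iic js, M k) - ∑ k ∈ Finset.range i, G' k := by
        rw [hGi]; field_simp
      have : G' i ≤ (∑ k ∈ Iic js, M k) - ∑ k ∈ Finset.range i, G' k := by
        nlinarith
      rw [Finset.sum_range_succ]
      have := hFle js
      linarith
  have hGnn : ∀ i, 0 ≤ G' i := fun i => hstep i (hprefix i)
  set S := ∑ k ∈ Finset.range i', G' k with hSdef
  have hSnn : 0 ≤ S := Finset.sum_nonneg fun k _ => hGnn k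
  -- key identity
  have hGi' : G' i' = ((∑ k ∈ Iic j', M k) - S) / ((j' : ℝ) + 1) := by
    refine le_antisymm ?_ ?_
    · rw [hG' i']
      exact Finset.sup'_le _ _ fun j _ => hj' j
    · rw [hG' i', hSdef]
      exact Finset.le_sup' (fun j : Fin (m+1) =>
        ((∑ k ∈ Iic j, M k) - ∑ k ∈ Finset.range i', G' k) / ((j : ℝ) + 1)) (mem_univ j')
  have hkey : ((j' : ℝ) + 1) * G' i' = (∑ k ∈ Iic j', M k) - S := by
    rw [hGi']
    field_simp
  have hGi'nn : 0 ≤ G' i' := hGnn i'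
  have hptld0 : ptld 0 = S + G' i' := by
    rw [hptld 0, if_pos rfl, Finset.sum_range_succ]
  -- prefix sums of ptld
  have hIicsplit : ∀ k : Fin (m+1), Iic k = insert 0 (Ioc 0 k) := by
    intro k
    ext ℓ
    simp only [mem_Iic, mem_insert, mem_Ioc]
    constructor
    · intro h
      rcases eq_or_lt_of_le (Fin.zero_le ℓ) with h0 | h0
      · left; exact h0.symm
      · right; exact ⟨h0, h⟩
    · rintro (rfl | ⟨_, h⟩)
      · exact Fin.zero_le k
      · exact h
  have hcase1 : ∀ k : Fin (m+1), k ≤ j' →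
      ∑ ℓ ∈ Iic k, ptld ℓ = S + ((k : ℝ) + 1) * G' i' := by
    intro k hk
    rw [hIicsplit k, Finset.sum_insert (by simp), hptld0]
    have hconst : ∀ ℓ ∈ Ioc (0 : Fin (m+1)) k, ptld ℓ = G' i' := by
      intro ℓ hℓ
      simp only [mem_Ioc] at hℓ
      rw [hptld ℓ, if_neg hℓ.1.ne', if_pos (hℓ.2.trans hk)]
    have : ∑ ℓ ∈ Ioc 0 k, ptld ℓ = (k : ℝ) * G' i' := by
      rw [Finset.sum_congr rfl hconst, Finset.sum_const, Fin.card_Ioc]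
      simp [nsmul_eq_mul]
    rw [this]; ring
  have hcase2 : ∀ k : Fin (m+1), j' < k →
      ∑ ℓ ∈ Iic k, ptld ℓ = ∑ ℓ ∈ Iic k, M ℓ := by
    intro k hk
    have hsplit : ∀ f : Fin (m+1) → ℝ, ∑ ℓ ∈ Iic k, f ℓ = ∑ ℓ ∈ Iic j', f ℓ + ∑ ℓ ∈ Ioc j' k, f ℓ := by
      intro f
      rw [← Finset.sum_union]
      · congr 1
        ext ℓ
        simp only [mem_union, mem_Iic, mem_Ioc]
        constructor
        · intro h
          rcases le_or_gt ℓ j' with h' | h'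
          · left; exact h'
          · right; exact ⟨h', h⟩
        · rintro (h | ⟨_, h⟩)
          · exact h.trans hk.le
          · exact h
      · rw [Finset.disjoint_left]
        intro ℓ h1 h2
        simp only [mem_Iic] at h1
        simp only [mem_Ioc] at h2
        exact absurd h1 (not_le.mpr h2.1)
    rw [hsplit ptld, hsplit M]
    have h1 : ∑ ℓ ∈ Iic j', ptld ℓ = ∑ ℓ ∈ Iic j', M ℓ := by
      rw [hcase1 j' le_rfl]
      linarith [hkey]
    have h2 : ∑ ℓ ∈ Ioc j' k, ptld ℓ = ∑ ℓ ∈ Ioc j' k, M ℓ := by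
      refine Finset.sum_congr rfl fun ℓ hℓ => ?_
      simp only [mem_Ioc] at hℓ
      have hne : ℓ ≠ 0 := by
        intro h; rw [h] at hℓ; exact absurd hℓ.1 (by simp [Fin.lt_def])
      rw [hptld ℓ, if_neg hne, if_neg (not_le.mpr hℓ.1)]
    rw [h1, h2]
  refine ⟨?_, ?_, ?_⟩
  · intro k
    rw [hptld k]
    split_ifs with h1 h2
    · rw [Finset.sum_range_succ]; linarith
    · exact hGi'nn
    · exact hpos k
  · have huniv : (univ : Finset (Fin (m+1))) = Iic (Fin.last m) := by
      ext ℓ; simp [Fin.le_last]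
    rw [huniv]
    rcases le_or_gt (Fin.last m) j' with h | h
    · have hj'eq : j' = Fin.last m := le_antisymm (Fin.le_last j') h
      rw [hcase1 _ h, ← hj'eq]
      rw [hj'eq] at hkey ⊢
      rw [hFlast] at hkey
      linarith
    · rw [hcase2 _ h, hFlast]
  · intro k
    rcases le_or_gt k j' with h | h
    · rw [hcase1 k h]
      have := hj' k
      rw [← hGi'] at this
      rw [div_le_iff₀ (by positivity)] at this
      linarith
    · rw [hcase2 k h]
end

section
/- Let M be a probability distribution on n states with values sorted nonincreasingly, and let G′ be the sequence defined recursively by G′(i) = max_{1≤j≤n} (∑_{k=1}^{j} M(k) − ∑_{k=1}^{i−1} G′(k)) / j. Let C be a distribution with values sorted nonincreasingly, and suppose i′ is the earliest index with ∑_{k=1}^{i′} C(k) > ∑_{k=1}^{i′} G′(k) (so ∑_{k=1}^{i} C(k) ≤ ∑_{k=1}^{i} G′(k) for all i < i′). Let j′ be the largest maximizer of j ↦ (∑_{k=1}^{j} M(k) − ∑_{k=1}^{i′−1} G′(k))/j over j ∈ {1,…,n}, and define p̃ by p̃(1) = ∑_{ℓ=1}^{i′} G′(ℓ), p̃(k)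 = G′(i′) for 1 < k ≤ j′, and p̃(k) = M(k) for k > j′. Then C does not couple p̃: there is no map f from the indices of C to {1,…,n} with ∑_{j: f(j)=i} C(j) = p̃(i) for all i. -/
/-!
Suppose `f` witnesses the coupling. Every state of `p̃` other than the first carries mass at most
`G' i'`: for `k ≤ j'` by definition, and for `k > j'` because `j'` is the largest maximizer of the
averages, which forces `M (j' + 1) < G' i'`. Hence every atom of `C` larger than `G' i'` must be
sent to the first state. If all of `C 0, …, C i'` exceed `G' i'`, they fit into the first state,
whose mass is `∑_{ℓ ≤ i'} G' ℓ`, contradicting the violation at `i'`. Otherwise some `C a ≤ G' i'`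
with `a ≤ i'`; since `C` is sorted and `G'` is nonincreasing, the prefix inequality at `a - 1`
propagates up to `i'`, again contradicting the violation. The monotonicity of `G'` comes from the
recursion: its prefix sums never exceed the total mass of `M`, so `G'` is nonnegative, and a larger
subtracted prefix lowers every average.
-/

open Finset Real

noncomputable def excessAvg {n : ℕ} (M : Fin n → ℝ) (s : ℝ) (j : Fin n) : ℝ :=
  ((∑ k ∈ Iic j, M k) - s) / ((j : ℝ) + 1)

def IsGreedy {n : ℕ} [NeZero n] (M : Fin n → ℝ) (G : ℕ → ℝ) : Prop :=
  ∀ i, G i = univ.sup' univ_nonempty (excessAvg M (∑ k ∈ range i, G k))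

lemma excessAvg_le_of_le {n : ℕ} {M : Fin n → ℝ} {s t : ℝ} (hst : t ≤ s) (j : Fin n) :
    excessAvg M s j ≤ excessAvg M t j := by
  unfold excessAvg
  gcongr

lemma excessAvg_le_sub {n : ℕ} {M : Fin n → ℝ} (hM : ∀ k, 0 ≤ M k) {s : ℝ}
    (hs : s ≤ ∑ k, M k) (j : Fin n) : excessAvg M s j ≤ (∑ k, M k) - s :=
  calc excessAvg M s j ≤ ((∑ k, M k) - s) / ((j : ℝ) + 1) :=
        div_le_div_of_nonneg_right (sub_le_sub_right (sum_le_univ_sum_of_nonneg hM) s)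
          (by positivity)
    _ ≤ (∑ k, M k) - s := div_le_self (sub_nonneg.2 hs) (by simp)

lemma lt_excessAvg_of_largest_maximizer {n : ℕ} {M : Fin n → ℝ} (hM : Antitone M) {s : ℝ}
    {j' : Fin n} (hmax : ∀ j, excessAvg M s j ≤ excessAvg M s j')
    (hlargest : ∀ j, excessAvg M s j = excessAvg M s j' → j ≤ j') {i : Fin n} (hi : j' < i) :
    M i < excessAvg M s j' := by
  set v := excessAvg M s j'
  have hlt : excessAvg M s i < v := (hmax i).lt_of_ne fun h => (hlargest i h).not_gt hi
  have hsplit : ∑ k ∈ Iic i, M k = ∑ k ∈ Iic j', M k + ∑ k ∈ Ioc j' i, M k := by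
    rw [← Iic_union_Ioc_eq_Iic hi.le, sum_union]
    exact disjoint_left.2 fun k hk hk' => (mem_Iic.1 hk).not_gt (mem_Ioc.1 hk').1
  have htail : ((i : ℝ) - j') * M i ≤ ∑ k ∈ Ioc j' i, M k := by
    have := card_nsmul_le_sum (Ioc j' i) M (M i) fun k hk => hM (mem_Ioc.1 hk).2
    rwa [Fin.card_Ioc, nsmul_eq_mul, Nat.cast_sub (le_of_lt hi)] at this
  have hv : (∑ k ∈ Iic j', M k) - s = v * ((j' : ℝ) + 1) := by
    unfold v excessAvg
    field_simp
  have hi' : (∑ k ∈ Iic i, M k) - s < v * ((i : ℝ) + 1) := by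
    rwa [excessAvg, div_lt_iff₀ (by positivity)] at hlt
  have hgap : (0 : ℝ) < (i : ℝ) - j' := sub_pos.2 (by exact_mod_cast hi)
  nlinarith

namespace IsGreedy

variable {n : ℕ} [NeZero n] {M : Fin n → ℝ} {G : ℕ → ℝ}

lemma sum_range_le (hG : IsGreedy M G) (hM : ∀ k, 0 ≤ M k) (i : ℕ) :
    ∑ k ∈ range i, G k ≤ ∑ k, M k := by
  induction i with
  | zero => simpa using sum_nonneg fun k _ => hM k
  | succ i ih =>
    have hGi : G i ≤ (∑ k, M k) - ∑ k ∈ range i, G k := by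
      rw [hG i]
      exact sup'_le _ _ fun j _ => excessAvg_le_sub hM ih j
    rw [sum_range_succ]
    linarith

lemma nonneg (hG : IsGreedy M G) (hM : ∀ k, 0 ≤ M k) (i : ℕ) : 0 ≤ G i := by
  have hlast : 0 ≤ excessAvg M (∑ k ∈ range i, G k) ⊤ := by
    unfold excessAvg
    rw [Iic_top]
    exact div_nonneg (sub_nonneg.2 (hG.sum_range_le hM i)) (by positivity)
  exact hlast.trans ((le_sup' _ (mem_univ ⊤)).trans_eq (hG i).symm)

lemma antitone (hG : IsGreedy M G) (hM : ∀ k, 0 ≤ M k) : Antitone G := by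
  intro i i' hii'
  rw [hG i, hG i']
  exact sup'_mono_fun fun j _ => excessAvg_le_of_le
    (sum_le_sum_of_subset_of_nonneg (range_subset_range.2 hii') fun k _ _ => hG.nonneg hM k) j

lemma eq_excessAvg_of_forall_le (hG : IsGreedy M G) {i : ℕ} {j' : Fin n}
    (hmax : ∀ j, excessAvg M (∑ k ∈ range i, G k) j ≤ excessAvg M (∑ k ∈ range i, G k) j') :
    G i = excessAvg M (∑ k ∈ range i, G k) j' :=
  (hG i).trans <| le_antisymm (sup'_le _ _ fun j _ => hmax j) (le_sup' _ (mem_univ j'))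

end IsGreedy

lemma sum_le_tsum_fiber {ι : Type*} {C : ℕ → ℝ} (hC : Summable C) (hCnn : ∀ j, 0 ≤ C j)
    (f : ℕ → ι) {i : ι} {s : Finset ℕ} (hs : ∀ k ∈ s, f k = i) :
    ∑ k ∈ s, C k ≤ ∑' j : {j : ℕ // f j = i}, C j := by
  classical
  calc ∑ k ∈ s, C k = ∑ j ∈ s.subtype (f · = i), C j := by
        rw [sum_subtype_eq_sum_filter, filter_true_of_mem hs]
    _ ≤ ∑' j : {j : ℕ // f j = i}, C j :=
        (hC.subtype _).sum_le_tsum _ (fun j _ => hCnn j)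

lemma sum_range_succ_le_of_antitone {C G : ℕ → ℝ} (hC : Antitone C) (hG : Antitone G)
    {a m : ℕ} (ham : a ≤ m) (hpre : ∑ k ∈ range a, C k ≤ ∑ k ∈ range a, G k)
    (hCa : C a ≤ G m) : ∑ k ∈ range (m + 1), C k ≤ ∑ k ∈ range (m + 1), G k := by
  have htail : ∑ k ∈ Ico a (m + 1), C k ≤ ∑ k ∈ Ico a (m + 1), G k :=
    sum_le_sum fun k hk =>
      have hk := mem_Ico.1 hk
      (hC hk.1).trans (hCa.trans (hG (Nat.lt_succ_iff.1 hk.2)))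
  rw [← sum_range_add_sum_Ico C (by omega : a ≤ m + 1),
    ← sum_range_add_sum_Ico G (by omega : a ≤ m + 1)]
  exact add_le_add hpre htail

theorem coupling_fails_on_adversarial_distribution_general
    (n : ℕ) [NeZero n] (M : Fin n → ℝ)
    (hsort : Antitone M) (hpos : ∀ k, 0 ≤ M k)
    (G' : ℕ → ℝ)
    (hG' : ∀ i, G' i = univ.sup' univ_nonempty fun j : Fin n =>
      ((∑ k ∈ Iic j, M k) - ∑ k ∈ Finset.range i, G' k) / ((j : ℝ) + 1))
    (C : ℕ → ℝ)
    (hCsort : Antitone C) (hCpos : ∀ j, 0 ≤ C j) (hCsum : HasSum C 1)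
    (i' : ℕ)
    (hviol : ∑ k ∈ Finset.range (i' + 1), G' k < ∑ k ∈ Finset.range (i' + 1), C k)
    (hfirst : ∀ i < i', ∑ k ∈ Finset.range (i + 1), C k ≤ ∑ k ∈ Finset.range (i + 1), G' k)
    (j' : Fin n)
    (hj'max : ∀ j : Fin n,
      ((∑ k ∈ Iic j, M k) - ∑ k ∈ Finset.range i', G' k) / ((j : ℝ) + 1) ≤
        ((∑ k ∈ Iic j', M k) - ∑ k ∈ Finset.range i', G' k) / ((j' : ℝ) + 1))
    (hj'largest : ∀ j : Fin n,
      ((∑ k ∈ Iic j, M k) - ∑ k ∈ Finset.range i', G' k) / ((j : ℝ) + 1) =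
        ((∑ k ∈ Iic j', M k) - ∑ k ∈ Finset.range i', G' k) / ((j' : ℝ) + 1) → j ≤ j')
    (ptld : Fin n → ℝ)
    (hptld : ∀ k : Fin n, ptld k =
      if k = 0 then ∑ ℓ ∈ Finset.range (i' + 1), G' ℓ
      else if k ≤ j' then G' i'
      else M k) :
    ¬ Couples C ptld := by
  rintro ⟨f, hf⟩
  have hG : IsGreedy M G' := hG'
  have hval : G' i' = excessAvg M (∑ k ∈ range i', G' k) j' := hG.eq_excessAvg_of_forall_le hj'max
  have hsmall : ∀ k ≠ 0, ptld k ≤ G' i' := fun k hk => by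
    rw [hptld k, if_neg hk]
    split_ifs with hkj
    · exact le_rfl
    · exact hval ▸ (lt_excessAvg_of_largest_maximizer hsort hj'max hj'largest (not_le.1 hkj)).le
  by_cases hbig : ∀ k ≤ i', G' i' < C k
  · have hto0 : ∀ k ∈ range (i' + 1), f k = 0 := fun k hk => by
      by_contra hk0
      have hCk : C k ≤ ptld (f k) := by
        simpa [hf] using sum_le_tsum_fiber hCsum.summable hCpos f (s := {k}) (by simp)
      linarith [hsmall _ hk0, hbig k (Nat.lt_succ_iff.1 (mem_range.1 hk))]
    have := sum_le_tsum_fiber hCsum.summable hCpos f hto0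
    rw [hf, hptld, if_pos rfl] at this
    linarith
  · push Not at hbig
    obtain ⟨a, hai', hCa⟩ := hbig
    have hpre : ∑ k ∈ range a, C k ≤ ∑ k ∈ range a, G' k := by
      rcases a with _ | b
      · simp
      · exact hfirst b hai'
    linarith [sum_range_succ_le_of_antitone hCsort (hG.antitone hpos) hai' hpre hCa]

/-- **Claim 5 (`C` cannot couple `p̃`).**
Let `M` be a sorted distribution on `n` states, `G'` satisfy the recursion
`G' i = max_{1≤j≤n} (∑_{k=1}^{j} M k − ∑_{k<i} G' k)/j`, and `C` be a sorted
distribution.  Suppose `i'` is the earliest index (0-indexed, prefix `range (i'+1)`)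
where the prefix sum of `C` exceeds that of `G'`, and `j' : Fin n` is the largest
maximizer of `j ↦ (∑_{k=1}^{j} M k − ∑_{k<i'} G' k)/j`.  With `p̃` defined by
`p̃ 1 = ∑_{ℓ=1}^{i'} G' ℓ`, `p̃ k = G' i'` for `1 < k ≤ j'`, `p̃ k = M k` for `k > j'`,
the distribution `C` does not couple `p̃`. -/
theorem coupling_fails_on_adversarial_distribution
    (n : ℕ) [NeZero n] (M : Fin n → ℝ)
    (hsort : Antitone M) (hpos : ∀ k, 0 ≤ M k) (hsum : ∑ k, M k = 1)
    (G' : ℕ → ℝ)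
    (hG' : ∀ i, G' i = univ.sup' univ_nonempty fun j : Fin n =>
      ((∑ k ∈ Iic j, M k) - ∑ k ∈ Finset.range i, G' k) / ((j : ℝ) + 1))
    (C : ℕ → ℝ)
    (hCsort : Antitone C) (hCpos : ∀ j, 0 ≤ C j) (hCsum : HasSum C 1)
    (i' : ℕ)
    (hviol : ∑ k ∈ Finset.range (i' + 1), G' k < ∑ k ∈ Finset.range (i' + 1), C k)
    (hfirst : ∀ i < i', ∑ k ∈ Finset.range (i + 1), C k ≤ ∑ k ∈ Finset.range (i + 1), G' k)
    (j' : Fin n)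
    (hj'max : ∀ j : Fin n,
      ((∑ k ∈ Iic j, M k) - ∑ k ∈ Finset.range i', G' k) / ((j : ℝ) + 1) ≤
        ((∑ k ∈ Iic j', M k) - ∑ k ∈ Finset.range i', G' k) / ((j' : ℝ) + 1))
    (hj'largest : ∀ j : Fin n,
      ((∑ k ∈ Iic j, M k) - ∑ k ∈ Finset.range i', G' k) / ((j : ℝ) + 1) =
        ((∑ k ∈ Iic j', M k) - ∑ k ∈ Finset.range i', G' k) / ((j' : ℝ) + 1) → j ≤ j')
    (ptld : Fin n → ℝ)
    (hptld : ∀ k : Fin n, ptld k =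
      if k = 0 then ∑ ℓ ∈ Finset.range (i' + 1), G' ℓ
      else if k ≤ j' then G' i'
      else M k) :
    ¬ Couples C ptld :=
  coupling_fails_on_adversarial_distribution_general n M hsort hpos G' hG' C hCsort hCpos hCsum i'
    hviol hfirst j' hj'max hj'largest ptld hptld
end

section
/- Let S = {p₁,…,p_m} be a finite set of probability distributions, each on n states with values sorted nonincreasingly, let G_S be the output distribution of the greedy coupling algorithm, and let ∧S be the greatest lower bound of S under majorization. Then H(G_S) ≤ H(∧S) + log₂(e). -/
open Finset Real

private lemma psi_ineq (z z' : ℝ) (h0 : 0 ≤ z') (h : z' ≤ z) :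
    0 ≤ z' * Real.log z' - z' * Real.log z + z - z' := by
  rcases eq_or_lt_of_le h0 with h0' | h0'
  · rw [← h0']
    simp only [zero_mul]
    linarith
  · have hz : 0 < z := lt_of_lt_of_le h0' h
    have h1 : Real.log (z / z') ≤ z / z' - 1 := Real.log_le_sub_one_of_pos (by positivity)
    rw [Real.log_div (ne_of_gt hz) (ne_of_gt h0')] at h1
    have h2 := mul_le_mul_of_nonneg_left h1 (le_of_lt h0')
    have h3 : z' * (z / z') = z := by field_simp
    rw [mul_sub, mul_sub, h3, mul_one] at h2
    linarith

private lemma abel_sum (f : ℕ → ℝ) (n : ℕ) :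
    ∑ s ∈ Icc 1 n, (s : ℝ) * (f (s + 1) - f s)
      = n * f (n + 1) - ∑ s ∈ Icc 1 n, f s := by
  induction n with
  | zero => simp
  | succ k ih =>
      rw [Finset.sum_Icc_succ_top (by omega), Finset.sum_Icc_succ_top (by omega), ih]
      push_cast
      ring

noncomputable section

private def Bf (b : ℕ → ℝ) (s : ℕ) : ℝ := ∑ u ∈ Icc 1 s, b u
private def xf (b : ℕ → ℝ) (s : ℕ) : ℝ := Bf b s - s * b (s + 1)
private def psi (z : ℝ) : ℝ := z * Real.log z - z
private def phif (b : ℕ → ℝ) (s : ℕ) (y : ℝ) : ℝ := y * Real.log s + psi (Bf b s - y)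
private def clip (b : ℕ → ℝ) (s : ℕ) (y : ℝ) : ℝ := max (xf b (s - 1)) (min y (xf b s))
private def Phi (b : ℕ → ℝ) (n : ℕ) (y : ℝ) : ℝ :=
  ∑ s ∈ Icc 1 n, (phif b s (clip b s y) - phif b s (xf b (s - 1)))

variable {b : ℕ → ℝ} {n : ℕ}

private lemma Bf_succ (b : ℕ → ℝ) (s : ℕ) : Bf b (s + 1) = Bf b s + b (s + 1) := by
  rw [Bf, Bf, Finset.sum_Icc_succ_top (by omega)]

private lemma Bf_zero (b : ℕ → ℝ) : Bf b 0 = 0 := by simp [Bf]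

private lemma xf_zero (b : ℕ → ℝ) : xf b 0 = 0 := by simp [xf, Bf]

private lemma xf_succ_sub (b : ℕ → ℝ) (s : ℕ) :
    xf b (s + 1) - xf b s = (s + 1 : ℝ) * (b (s + 1) - b (s + 2)) := by
  rw [xf, xf, Bf_succ]
  push_cast
  ring

private lemma xf_mono (hbmono : ∀ s, 1 ≤ s → b (s + 1) ≤ b s) : Monotone (xf b) := by
  apply monotone_nat_of_le_succ
  intro s
  have h := xf_succ_sub b s
  have h2 : b (s + 2) ≤ b (s + 1) := hbmono (s + 1) (by omega)
  nlinarith [Nat.cast_nonneg (α := ℝ) s]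

private lemma Bf_sub_xf (b : ℕ → ℝ) (s : ℕ) :
    Bf b (s + 1) - xf b s = ((s + 1 : ℕ) : ℝ) * b (s + 1) := by
  rw [xf, Bf_succ]; push_cast; ring

private lemma xf_le_Bf (hb0 : ∀ s, 0 ≤ b s) (s : ℕ) : xf b s ≤ Bf b s := by
  have h1 := hb0 (s + 1)
  have h2 : (0:ℝ) ≤ (s:ℝ) * b (s + 1) := by positivity
  rw [xf]; linarith

private lemma Bf_mono (hb0 : ∀ s, 0 ≤ b s) : Monotone (Bf b) := by
  apply monotone_nat_of_le_succ
  intro s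
  rw [Bf_succ]
  linarith [hb0 (s + 1)]

private lemma env_chain (hbmono : ∀ s, 1 ≤ s → b (s + 1) ≤ b s)
    {σ s : ℕ} (x' : ℝ) (hσ1 : 1 ≤ σ) (hσs : σ ≤ s) (hx : x' ≤ xf b σ) :
    (Bf b s - x') / s ≤ (Bf b σ - x') / σ := by
  induction s with
  | zero => omega
  | succ k ih =>
      rcases Nat.lt_or_ge σ (k + 1) with hlt | hge
      · have hσk : σ ≤ k := by omega
        have ihk := ih hσk
        refine le_trans ?_ ihk
        have hk1 : (0:ℝ) < k := by
          have h1 : 1 ≤ k := by omega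
          exact_mod_cast Nat.lt_of_lt_of_le Nat.zero_lt_one h1
        have hk2 : (0:ℝ) < (k:ℝ) + 1 := by linarith
        have hcast : ((k+1 : ℕ) : ℝ) = (k:ℝ) + 1 := by push_cast; ring
        rw [hcast, div_le_div_iff₀ hk2 hk1]
        have hxk : x' ≤ xf b k := hx.trans (xf_mono hbmono hσk)
        have hB : Bf b (k + 1) = Bf b k + b (k + 1) := Bf_succ b k
        have hxf : xf b k = Bf b k - k * b (k + 1) := rfl
        nlinarith
      · have hEq : σ = k + 1 := by omega
        subst hEq
        exact le_refl _
private lemma psi_scale {s : ℕ} (hs : 1 ≤ s) {c : ℝ} (hc : 0 ≤ c) :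
    psi ((s : ℝ) * c) = s * psi c + s * c * Real.log s := by
  rcases eq_or_lt_of_le hc with h | h
  · simp [psi, ← h]
  · have hs0 : (s : ℝ) ≠ 0 := by positivity
    rw [psi, psi, Real.log_mul hs0 (ne_of_gt h)]
    ring

private lemma clip_mono (b : ℕ → ℝ) (s : ℕ) {y y' : ℝ} (h : y ≤ y') :
    clip b s y ≤ clip b s y' :=
  max_le_max le_rfl (min_le_min h le_rfl)

private lemma clip_le (hbmono : ∀ s, 1 ≤ s → b (s + 1) ≤ b s) (s : ℕ) (y : ℝ) :
    clip b s y ≤ xf b s :=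
  max_le (xf_mono hbmono (by omega)) (min_le_right _ _)

private lemma le_clip (b : ℕ → ℝ) (s : ℕ) (y : ℝ) : xf b (s - 1) ≤ clip b s y :=
  le_max_left _ _

private lemma clip_sum (hbmono : ∀ s, 1 ≤ s → b (s + 1) ≤ b s) {y : ℝ} (h0 : 0 ≤ y) :
    ∀ k, ∑ s ∈ Icc 1 k, (clip b s y - xf b (s - 1)) = min y (xf b k)
  | 0 => by
      simp [xf_zero, min_eq_right h0]
  | (k + 1) => by
      rw [Finset.sum_Icc_succ_top (by omega), clip_sum hbmono h0 k]
      have hks : (k + 1) - 1 = k := by omega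
      rw [clip, hks]
      have hxm : xf b k ≤ xf b (k + 1) := xf_mono hbmono (by omega)
      rcases le_total y (xf b k) with h | h
      · have h1 : min y (xf b k) = y := min_eq_left h
        have h2 : min y (xf b (k + 1)) = y := min_eq_left (h.trans hxm)
        rw [h1, h2, max_eq_left h]
        ring
      · have h1 : min y (xf b k) = xf b k := min_eq_right h
        have h2 : xf b k ≤ min y (xf b (k + 1)) := le_min h hxm
        rw [h1, max_eq_right h2]
        ring

private lemma phif_conv (b : ℕ → ℝ) (s : ℕ) {u v : ℝ} (huv : u ≤ v) (hv : 0 ≤ Bf b s - v) :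
    (Real.log s - Real.log (Bf b s - u)) * (v - u) ≤ phif b s v - phif b s u := by
  have key := psi_ineq (Bf b s - u) (Bf b s - v) hv (by linarith)
  rw [phif, phif, psi, psi]
  nlinarith [key]

private lemma Phi_mono (hb0 : ∀ s, 0 ≤ b s) (hbmono : ∀ s, 1 ≤ s → b (s + 1) ≤ b s)
    (hB1 : Bf b n = 1) {y y' : ℝ} (h0 : 0 ≤ y) (hyy : y ≤ y') :
    Phi b n y ≤ Phi b n y' := by
  rw [Phi, Phi]
  apply Finset.sum_le_sum
  intro s hs
  rw [Finset.mem_Icc] at hs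
  have hs1 : 1 ≤ s := hs.1
  have hsn : s ≤ n := hs.2
  have hu : clip b s y ≤ clip b s y' := clip_mono b s hyy
  have hvx : clip b s y' ≤ xf b s := clip_le hbmono s y'
  have hvB : clip b s y' ≤ Bf b s := hvx.trans (xf_le_Bf hb0 s)
  have h00 : (0:ℝ) ≤ xf b (s - 1) := by
    have := xf_mono hbmono (Nat.zero_le (s - 1))
    rw [xf_zero] at this
    exact this
  have huu : 0 ≤ clip b s y := le_trans h00 (le_clip b s y)
  have hBs1 : Bf b s ≤ 1 := by
    rw [← hB1]; exact Bf_mono hb0 hsn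
  have hw : 0 ≤ Real.log s - Real.log (Bf b s - clip b s y) := by
    have h1 : 0 ≤ Real.log (s : ℝ) := Real.log_natCast_nonneg s
    have h2 : Real.log (Bf b s - clip b s y) ≤ 0 := by
      apply Real.log_nonpos
      · linarith [hu.trans hvB]
      · linarith
    linarith
  have := phif_conv b s hu (by linarith)
  nlinarith [this, hw, hu]
private lemma Phi_zero (hbmono : ∀ s, 1 ≤ s → b (s + 1) ≤ b s) : Phi b n 0 = 0 := by
  rw [Phi]
  apply Finset.sum_eq_zero
  intro s hs
  have h0 : (0:ℝ) ≤ xf b s := by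
    have := xf_mono hbmono (Nat.zero_le s)
    rwa [xf_zero] at this
  have h0' : (0:ℝ) ≤ xf b (s - 1) := by
    have := xf_mono hbmono (Nat.zero_le (s - 1))
    rwa [xf_zero] at this
  have hc : clip b s 0 = xf b (s - 1) := by
    rw [clip, min_eq_left h0, max_eq_left h0']
  rw [hc, sub_self]

private lemma Phi_one (hb0 : ∀ s, 0 ≤ b s) (hbmono : ∀ s, 1 ≤ s → b (s + 1) ≤ b s)
    (hbtop : b (n + 1) = 0) (hB1 : Bf b n = 1) :
    Phi b n 1 = ∑ s ∈ Icc 1 n, (b s * Real.log (b s)⁻¹ + b s) := by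
  have hxfn : xf b n = 1 := by
    rw [xf, hbtop, hB1]; ring
  have hclip : ∀ s ∈ Icc 1 n, clip b s 1 = xf b s := by
    intro s hs
    rw [Finset.mem_Icc] at hs
    have h1 : xf b s ≤ 1 := by
      rw [← hxfn]; exact xf_mono hbmono hs.2
    have h2 : xf b (s - 1) ≤ xf b s := xf_mono hbmono (by omega)
    rw [clip, min_eq_right h1, max_eq_right h2]
  have hterm : ∀ s ∈ Icc 1 n,
      phif b s (clip b s 1) - phif b s (xf b (s - 1))
        = (s : ℝ) * (psi (b (s + 1)) - psi (b s)) := by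
    intro s hs
    rw [hclip s hs]
    rw [Finset.mem_Icc] at hs
    obtain ⟨k, rfl⟩ : ∃ k, s = k + 1 := ⟨s - 1, by omega⟩
    rw [Nat.add_sub_cancel, phif, phif]
    have e1 : Bf b (k + 1) - xf b (k + 1) = ((k + 1 : ℕ) : ℝ) * b (k + 1 + 1) := by
      rw [xf]; ring
    have e2 : Bf b (k + 1) - xf b k = ((k + 1 : ℕ) : ℝ) * b (k + 1) := Bf_sub_xf b k
    rw [e1, e2, psi_scale (by omega) (hb0 (k + 1 + 1)), psi_scale (by omega) (hb0 (k + 1))]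
    have e4 : xf b (k + 1) = xf b k + ((k:ℝ) + 1) * (b (k + 1) - b (k + 2)) := by
      have := xf_succ_sub b k
      linarith
    rw [e4]
    have hk2 : k + 1 + 1 = k + 2 := rfl
    rw [hk2]
    push_cast
    ring
  rw [Phi, Finset.sum_congr rfl hterm, abel_sum (fun s => psi (b s)) n]
  have hp0 : psi (b (n + 1)) = 0 := by rw [hbtop]; simp [psi]
  simp only [hp0, mul_zero, zero_sub]
  rw [← Finset.sum_neg_distrib]
  apply Finset.sum_congr rfl
  intro s _
  rw [Real.log_inv, psi]
  ring

private lemma sub_lemma (hb0 : ∀ s, 0 ≤ b s) (hbmono : ∀ s, 1 ≤ s → b (s + 1) ≤ b s)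
    (hbtop : b (n + 1) = 0) (hB1 : Bf b n = 1)
    {x' y : ℝ} {σ : ℕ} (h0 : 0 ≤ x') (hxy : x' ≤ y) (hy : y ≤ 1)
    (hσ1 : 1 ≤ σ) (hσn : σ ≤ n) (hl : xf b (σ - 1) ≤ x') (hr : x' < xf b σ) :
    (Real.log σ - Real.log (Bf b σ - x')) * (y - x') ≤ Phi b n y - Phi b n x' := by
  have hxfn : xf b n = 1 := by rw [xf, hbtop, hB1]; ring
  have hBσpos : 0 < Bf b σ - x' := by
    have := xf_le_Bf hb0 σ
    linarith
  have per : ∀ s ∈ Icc 1 n,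
      (Real.log σ - Real.log (Bf b σ - x')) * (clip b s y - clip b s x') ≤
        phif b s (clip b s y) - phif b s (clip b s x') := by
    intro s hs
    rw [Finset.mem_Icc] at hs
    obtain ⟨k, rfl⟩ : ∃ k, s = k + 1 := ⟨s - 1, by omega⟩
    have huv : clip b (k + 1) x' ≤ clip b (k + 1) y := clip_mono b (k + 1) hxy
    rcases eq_or_lt_of_le huv with heq | hlt
    · rw [heq, sub_self, mul_zero, sub_self]
    · have hvx : clip b (k + 1) y ≤ xf b (k + 1) := clip_le hbmono (k + 1) y
      have hvB : 0 ≤ Bf b (k + 1) - clip b (k + 1) y := by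
        linarith [xf_le_Bf hb0 (k + 1)]
      have hσs : σ ≤ k + 1 := by
        by_contra hcon
        push_neg at hcon
        have hs' : k + 1 ≤ σ - 1 := by omega
        have h1 : xf b (k + 1) ≤ x' := (xf_mono hbmono hs').trans hl
        have h2 : min x' (xf b (k + 1)) = xf b (k + 1) := min_eq_right h1
        have h3 : clip b (k + 1) x' = xf b (k + 1) := by
          rw [clip, Nat.add_sub_cancel, h2, max_eq_right (xf_mono hbmono (by omega))]
        have : xf b (k + 1) < xf b (k + 1) := lt_of_lt_of_le (h3 ▸ hlt) hvx
        exact absurd this (lt_irrefl _)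
      have hxs : x' ≤ xf b (k + 1) := (le_of_lt hr).trans (xf_mono hbmono hσs)
      have humax : clip b (k + 1) x' = max x' (xf b k) := by
        rw [clip, Nat.add_sub_cancel, min_eq_left hxs, max_comm]
      rcases eq_or_lt_of_le hσs with hseq | hslt
      · -- σ = k + 1 : clip x' = x'
        subst hseq
        rw [Nat.add_sub_cancel] at hl
        have hux : clip b (k + 1) x' = x' := by
          rw [humax, max_eq_left hl]
        have hconv := phif_conv b (k + 1) huv hvB
        rw [hux] at hconv ⊢
        exact hconv
      · -- σ < k + 1 : clip x' = xf b k
        have hσs1 : σ ≤ k := by omega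
        have hx's1 : x' ≤ xf b k := (le_of_lt hr).trans (xf_mono hbmono hσs1)
        have hux : clip b (k + 1) x' = xf b k := by rw [humax, max_eq_right hx's1]
        have hBsu : Bf b (k + 1) - clip b (k + 1) x' = ((k + 1 : ℕ) : ℝ) * b (k + 1) := by
          rw [hux]; exact Bf_sub_xf b k
        have hbspos : 0 < b (k + 1) := by
          have hxlt : xf b k < xf b (k + 1) := by
            calc xf b k = clip b (k + 1) x' := hux.symm
              _ < clip b (k + 1) y := hlt
              _ ≤ xf b (k + 1) := hvx
          have he := xf_succ_sub b k
          by_contra hcon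
          push_neg at hcon
          have hb1 : b (k + 1) = 0 := le_antisymm hcon (hb0 (k + 1))
          have hb2 : b (k + 2) ≤ 0 := hb1 ▸ hbmono (k + 1) (by omega)
          have hb2' : b (k + 2) = 0 := le_antisymm hb2 (hb0 (k + 2))
          rw [hb1, hb2'] at he
          simp at he
          linarith
        have hwle : Real.log σ - Real.log (Bf b σ - x')
            ≤ Real.log ((k + 1 : ℕ) : ℝ) - Real.log (Bf b (k + 1) - clip b (k + 1) x') := by
          rw [hBsu, Real.log_mul (by positivity) (ne_of_gt hbspos)]
          have hσpos : (0:ℝ) < (σ:ℝ) := by exact_mod_cast hσ1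
          have hchain := env_chain hbmono x' hσ1 (by omega : σ ≤ k + 1) (le_of_lt hr)
          have hk1pos : (0:ℝ) < ((k + 1 : ℕ) : ℝ) := by positivity
          have hbs_le : b (k + 1) ≤ (Bf b (k + 1) - x') / ((k + 1 : ℕ) : ℝ) := by
            rw [le_div_iff₀ hk1pos]
            have hBkx := Bf_sub_xf b k
            nlinarith [hx's1]
          have hσbs : (σ:ℝ) * b (k + 1) ≤ Bf b σ - x' := by
            have h4 : b (k + 1) ≤ (Bf b σ - x') / σ := hbs_le.trans hchain
            rw [le_div_iff₀ hσpos] at h4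
            linarith [h4]
          have hlog : Real.log ((σ:ℝ) * b (k + 1)) ≤ Real.log (Bf b σ - x') :=
            Real.log_le_log (by positivity) hσbs
          rw [Real.log_mul (ne_of_gt hσpos) (ne_of_gt hbspos)] at hlog
          linarith
        have hconv := phif_conv b (k + 1) huv hvB
        have hmul := mul_le_mul_of_nonneg_right hwle
          (by linarith : (0:ℝ) ≤ clip b (k + 1) y - clip b (k + 1) x')
        linarith
  have hx1 : x' ≤ 1 := hxy.trans hy
  have hcy := clip_sum hbmono (h0.trans hxy) n
  have hcx := clip_sum hbmono h0 n
  rw [hxfn, min_eq_left hy] at hcy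
  rw [hxfn, min_eq_left hx1] at hcx
  have hsum : ∑ s ∈ Icc 1 n, (clip b s y - clip b s x') = y - x' := by
    have hz : ∑ s ∈ Icc 1 n, (clip b s y - clip b s x')
        = ∑ s ∈ Icc 1 n, ((clip b s y - xf b (s-1)) - (clip b s x' - xf b (s-1))) := by
      apply Finset.sum_congr rfl; intro s _; ring
    rw [hz, Finset.sum_sub_distrib, hcy, hcx]
  have hPhi : Phi b n y - Phi b n x'
      = ∑ s ∈ Icc 1 n, (phif b s (clip b s y) - phif b s (clip b s x')) := by
    rw [Phi, Phi, ← Finset.sum_sub_distrib]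
    apply Finset.sum_congr rfl; intro s _; ring
  calc (Real.log σ - Real.log (Bf b σ - x')) * (y - x')
      = ∑ s ∈ Icc 1 n, (Real.log σ - Real.log (Bf b σ - x')) * (clip b s y - clip b s x') := by
        rw [← Finset.mul_sum, hsum]
    _ ≤ ∑ s ∈ Icc 1 n, (phif b s (clip b s y) - phif b s (clip b s x')) :=
        Finset.sum_le_sum per
    _ = Phi b n y - Phi b n x' := hPhi.symm
private lemma core_lemma (n : ℕ) (hn : 1 ≤ n) (b : ℕ → ℝ)
    (hb0 : ∀ s, 0 ≤ b s)
    (hbmono : ∀ s, 1 ≤ s → b (s + 1) ≤ b s)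
    (hbtop : b (n + 1) = 0)
    (hB1 : Bf b n = 1)
    (G : ℕ → ℝ) (hG0 : ∀ t, 0 ≤ G t)
    (hg1 : ∀ t, ∑ u ∈ range t, G u ≤ 1)
    (hkey : ∀ t s, 1 ≤ s → s ≤ n →
      Bf b s - ∑ u ∈ range t, G u ≤ (s : ℝ) * G t)
    (T : ℕ) :
    ∑ t ∈ range T, G t * Real.log (G t)⁻¹ ≤
      ∑ s ∈ Icc 1 n, (b s * Real.log (b s)⁻¹ + b s) := by
  classical
  have hxfn : xf b n = 1 := by rw [xf, hbtop, hB1]; ring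
  have hgnn : ∀ t, 0 ≤ ∑ u ∈ range t, G u := by
    intro t
    exact Finset.sum_nonneg fun u _ => hG0 u
  have main : ∀ T, ∑ t ∈ range T, G t * Real.log (G t)⁻¹
      ≤ Phi b n (∑ u ∈ range T, G u) := by
    intro T
    induction T with
    | zero => simp [Phi_zero hbmono]
    | succ T ih =>
        rw [Finset.sum_range_succ, Finset.sum_range_succ (f := G)]
        set x' : ℝ := ∑ u ∈ range T, G u with hx'
        rcases eq_or_lt_of_le (hG0 T) with hGT | hGT
        · rw [← hGT]
          simp only [zero_mul, add_zero]
          exact ih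
        · -- G T > 0
          have hy1 : x' + G T ≤ 1 := by
            have := hg1 (T + 1)
            rwa [Finset.sum_range_succ] at this
          have hx'lt1 : x' < 1 := by linarith
          have hex : ∃ s, x' < xf b (s + 1) := by
            refine ⟨n - 1, ?_⟩
            have hsn : n - 1 + 1 = n := by omega
            rw [hsn, hxfn]
            exact hx'lt1
          set σ : ℕ := Nat.find hex + 1 with hσdef
          have hσ1 : 1 ≤ σ := by omega
          have hσn : σ ≤ n := by
            have := Nat.find_min' hex (m := n - 1) (by
              have hsn : n - 1 + 1 = n := by omega
              rw [hsn, hxfn]; exact hx'lt1)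
            omega
          have hr : x' < xf b σ := Nat.find_spec hex
          have hl : xf b (σ - 1) ≤ x' := by
            have hσm : σ - 1 = Nat.find hex := by omega
            rw [hσm]
            rcases Nat.eq_zero_or_pos (Nat.find hex) with h | h
            · rw [h, xf_zero]
              exact hgnn T
            · obtain ⟨k, hk⟩ : ∃ k, Nat.find hex = k + 1 := ⟨Nat.find hex - 1, by omega⟩
              have := Nat.find_min hex (m := k) (by omega)
              push_neg at this
              rwa [hk]
          have hsub := sub_lemma hb0 hbmono hbtop hB1 (hgnn T)
            (by linarith : x' ≤ x' + G T) hy1 hσ1 hσn hl hr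
          have hBσpos : 0 < Bf b σ - x' := by
            have := xf_le_Bf hb0 σ
            linarith
          have hterm : G T * Real.log (G T)⁻¹
              ≤ (Real.log σ - Real.log (Bf b σ - x')) * G T := by
            rw [Real.log_inv]
            have hkσ : Bf b σ - x' ≤ (σ:ℝ) * G T := hkey T σ hσ1 hσn
            have hlog : Real.log (Bf b σ - x') ≤ Real.log ((σ:ℝ) * G T) :=
              Real.log_le_log hBσpos hkσ
            have hσ0 : ((σ:ℕ):ℝ) ≠ 0 := by
              have : (0:ℝ) < (σ:ℝ) := by exact_mod_cast hσ1
              exact ne_of_gt this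
            rw [Real.log_mul hσ0 (ne_of_gt hGT)] at hlog
            have : -Real.log (G T) ≤ Real.log σ - Real.log (Bf b σ - x') := by linarith
            calc G T * (-Real.log (G T)) ≤ G T * (Real.log σ - Real.log (Bf b σ - x')) :=
                  mul_le_mul_of_nonneg_left this (le_of_lt hGT)
              _ = (Real.log σ - Real.log (Bf b σ - x')) * G T := by ring
          rw [← hx'] at hsub
          have heq : x' + G T - x' = G T := by ring
          rw [heq] at hsub
          linarith
  calc ∑ t ∈ range T, G t * Real.log (G t)⁻¹
      ≤ Phi b n (∑ u ∈ range T, G u) := main T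
    _ ≤ Phi b n 1 := Phi_mono hb0 hbmono hB1 (hgnn T) (hg1 T)
    _ = ∑ s ∈ Icc 1 n, (b s * Real.log (b s)⁻¹ + b s) := Phi_one hb0 hbmono hbtop hB1
end

/-- **Theorem 4 (main approximation guarantee).**
With `p ℓ t` the residual vectors of the greedy coupling algorithm run on
`S = {p₁,…,p_m}` (each a sorted distribution on `n` states), `G` the greedy output
sequence and `M` the sorted value sequence of `∧S`:
`H(G_S) ≤ H(∧S) + log₂ e`. -/
theorem greedy_coupling_entropy_le_meet_add_log2e
    (m n : ℕ) [NeZero m] [NeZero n]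
    (p : Fin m → ℕ → Fin n → ℝ)      -- residuals: `p ℓ t` before step `t`; `p ℓ 0 = p_ℓ`
    (G : ℕ → ℝ)                       -- greedy output sequence
    (M : Fin n → ℝ)                   -- sorted values of ∧S
    (hsort : ∀ ℓ, Antitone (p ℓ 0))
    (hpos : ∀ ℓ k, 0 ≤ p ℓ 0 k)
    (hsum : ∀ ℓ, ∑ k, p ℓ 0 k = 1)
    (hG : ∀ t, G t = univ.inf' univ_nonempty fun ℓ => univ.sup' univ_nonempty (p ℓ t))
    (hstep : ∀ t ℓ, ∃ k, (∀ k', p ℓ t k' ≤ p ℓ t k) ∧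
      p ℓ (t + 1) = Function.update (p ℓ t) k (p ℓ t k - G t))
    (hM : ∀ i, M i =
      (univ.inf' univ_nonempty fun ℓ => ∑ j ∈ Iic i, p ℓ 0 j) - ∑ j ∈ Iio i, M j) :
    (∑' t : ℕ, G t * Real.logb 2 (G t)⁻¹) ≤
      (∑ i, M i * Real.logb 2 (M i)⁻¹) + Real.logb 2 (Real.exp 1) := by
  classical
  have hnpos : 0 < n := Nat.pos_of_ne_zero (NeZero.ne n)
  have hmpos : 0 < m := Nat.pos_of_ne_zero (NeZero.ne m)
  set mT : Fin n → ℝ := fun i => univ.inf' univ_nonempty fun ℓ => ∑ j ∈ Iic i, p ℓ 0 j with hmT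
  -- residuals stay nonnegative
  have hP : ∀ t ℓ k, 0 ≤ p ℓ t k := by
    intro t
    induction t with
    | zero => exact fun ℓ k => hpos ℓ k
    | succ t ih =>
        intro ℓ k
        obtain ⟨k0, hk0max, hupd⟩ := hstep t ℓ
        rw [hupd, Function.update_apply]
        split_ifs with h
        · have h1 : G t ≤ p ℓ t k0 := by
            rw [hG t]
            refine le_trans (Finset.inf'_le _ (Finset.mem_univ ℓ)) ?_
            exact Finset.sup'_le _ _ fun k' _ => hk0max k'
          have := ih ℓ k0
          linarith
        · exact ih ℓ k
  have hGnn : ∀ t, 0 ≤ G t := by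
    intro t
    rw [hG t]
    apply Finset.le_inf'
    intro ℓ _
    exact le_trans (hP t ℓ ⟨0, hnpos⟩) (Finset.le_sup' _ (Finset.mem_univ (⟨0, hnpos⟩ : Fin n)))
  -- total mass bookkeeping
  have hSum : ∀ ℓ t, ∑ k, p ℓ t k = 1 - ∑ u ∈ range t, G u := by
    intro ℓ t
    induction t with
    | zero => simp [hsum ℓ]
    | succ t ih =>
        obtain ⟨k0, hk0max, hupd⟩ := hstep t ℓ
        rw [hupd, Finset.sum_update_of_mem (Finset.mem_univ k0), Finset.sum_range_succ,
          Finset.sdiff_singleton_eq_erase, Finset.sum_erase_eq_sub (Finset.mem_univ k0), ih]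
        ring
  have hg1 : ∀ t, ∑ u ∈ range t, G u ≤ 1 := by
    intro t
    have h1 := hSum ⟨0, hmpos⟩ t
    have h2 : 0 ≤ ∑ k, p (⟨0, hmpos⟩ : Fin m) t k :=
      Finset.sum_nonneg fun k _ => hP t _ k
    linarith
  -- mass on a top set
  have hTop : ∀ ℓ (i : Fin n) t,
      ∑ k ∈ Iic i, p ℓ 0 k - ∑ u ∈ range t, G u ≤ ∑ k ∈ Iic i, p ℓ t k := by
    intro ℓ i t
    induction t with
    | zero => simp
    | succ t ih =>
        obtain ⟨k0, hk0max, hupd⟩ := hstep t ℓ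
        rw [hupd, Finset.sum_range_succ]
        by_cases hk : k0 ∈ Iic i
        · rw [Finset.sum_update_of_mem hk, Finset.sdiff_singleton_eq_erase,
            Finset.sum_erase_eq_sub hk]
          linarith
        · rw [Finset.sum_update_of_notMem hk]
          have := hGnn t
          linarith
  -- the key greedy inequality
  have hkey : ∀ (t : ℕ) (i : Fin n),
      mT i - ∑ u ∈ range t, G u ≤ (((i : ℕ) : ℝ) + 1) * G t := by
    intro t i
    obtain ⟨ℓ1, _, hℓ1⟩ := Finset.exists_mem_eq_inf' (univ_nonempty)
      (fun ℓ => univ.sup' univ_nonempty (p ℓ t))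
    have hGt : G t = univ.sup' univ_nonempty (p ℓ1 t) := by rw [hG t, hℓ1]
    have h1 : mT i ≤ ∑ k ∈ Iic i, p ℓ1 0 k := Finset.inf'_le _ (Finset.mem_univ ℓ1)
    have h2 := hTop ℓ1 i t
    have h3 : ∑ k ∈ Iic i, p ℓ1 t k
        ≤ (((i : ℕ) : ℝ) + 1) * univ.sup' univ_nonempty (p ℓ1 t) := by
      have hs := Finset.sum_le_card_nsmul (Iic i) (p ℓ1 t)
        (univ.sup' univ_nonempty (p ℓ1 t))
        (fun k _ => Finset.le_sup' _ (Finset.mem_univ k))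
      rw [Fin.card_Iic, nsmul_eq_mul] at hs
      push_cast at hs
      linarith
    rw [hGt]
    linarith
  -- M basics
  have hMIic : ∀ i : Fin n, ∑ j ∈ Iic i, M j = mT i := by
    intro i
    rw [← Finset.Iio_insert, Finset.sum_insert (by simp), hM i]
    simp only [hmT]
    ring
  have hIioIic : ∀ (j : ℕ) (h0 : j < n) (h1 : j + 1 < n),
      Finset.Iio (⟨j + 1, h1⟩ : Fin n) = Finset.Iic (⟨j, h0⟩ : Fin n) := by
    intro j h0 h1
    ext x
    simp only [Finset.mem_Iio, Finset.mem_Iic, Fin.lt_def, Fin.le_def]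
    omega
  have hIicsplit : ∀ (f : Fin n → ℝ) (j : ℕ) (h0 : j < n) (h1 : j + 1 < n),
      ∑ k ∈ Finset.Iic (⟨j + 1, h1⟩ : Fin n), f k
        = ∑ k ∈ Finset.Iic (⟨j, h0⟩ : Fin n), f k + f ⟨j + 1, h1⟩ := by
    intro f j h0 h1
    rw [← Finset.Iio_insert, Finset.sum_insert (by simp), hIioIic j h0 h1]
    ring
  have hIio0 : Finset.Iio (⟨0, hnpos⟩ : Fin n) = ∅ := by
    ext x
    simp [Fin.lt_def]
  have hIic0 : ∀ (f : Fin n → ℝ), ∑ k ∈ Finset.Iic (⟨0, hnpos⟩ : Fin n), f k = f ⟨0, hnpos⟩ := by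
    intro f
    rw [← Finset.Iio_insert, Finset.sum_insert (by simp), hIio0]
    simp
  have hmTmono : ∀ (j : ℕ) (h0 : j < n) (h1 : j + 1 < n),
      mT ⟨j, h0⟩ ≤ mT ⟨j + 1, h1⟩ := by
    intro j h0 h1
    show mT ⟨j, h0⟩ ≤ univ.inf' univ_nonempty fun ℓ => ∑ k ∈ Finset.Iic (⟨j + 1, h1⟩ : Fin n), p ℓ 0 k
    apply Finset.le_inf'
    intro ℓ _
    have ha : mT ⟨j, h0⟩ ≤ ∑ k ∈ Finset.Iic (⟨j, h0⟩ : Fin n), p ℓ 0 k :=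
      Finset.inf'_le _ (Finset.mem_univ ℓ)
    rw [hIicsplit (p ℓ 0) j h0 h1]
    have := hpos ℓ ⟨j + 1, h1⟩
    linarith
  have hMnn : ∀ i, 0 ≤ M i := by
    intro i
    obtain ⟨v, hv⟩ := i
    cases v with
    | zero =>
        rw [hM ⟨0, hv⟩]
        have h2 : Finset.Iio (⟨0, hv⟩ : Fin n) = ∅ := hIio0
        rw [h2]
        simp only [Finset.sum_empty, sub_zero]
        apply Finset.le_inf'
        intro ℓ _
        apply Finset.sum_nonneg
        intro k _
        exact hpos ℓ k
    | succ j =>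
        have h0 : j < n := by omega
        rw [hM ⟨j + 1, hv⟩, hIioIic j h0 hv, hMIic ⟨j, h0⟩]
        have := hmTmono j h0 hv
        linarith
  have hMmono : ∀ (j : ℕ) (h0 : j < n) (h1 : j + 1 < n),
      M ⟨j + 1, h1⟩ ≤ M ⟨j, h0⟩ := by
    intro j h0 h1
    obtain ⟨ℓs, _, hℓs⟩ := Finset.exists_mem_eq_inf' (univ_nonempty)
      (fun ℓ => ∑ k ∈ Finset.Iic (⟨j, h0⟩ : Fin n), p ℓ 0 k)
    have hMj1 : M ⟨j + 1, h1⟩ = mT ⟨j + 1, h1⟩ - mT ⟨j, h0⟩ := by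
      rw [hM ⟨j + 1, h1⟩, hIioIic j h0 h1, hMIic ⟨j, h0⟩]
    have hup : mT ⟨j + 1, h1⟩ ≤ mT ⟨j, h0⟩ + p ℓs 0 ⟨j + 1, h1⟩ := by
      have ha : mT ⟨j + 1, h1⟩ ≤ ∑ k ∈ Finset.Iic (⟨j + 1, h1⟩ : Fin n), p ℓs 0 k :=
        Finset.inf'_le _ (Finset.mem_univ ℓs)
      rw [hIicsplit (p ℓs 0) j h0 h1] at ha
      have hms : mT ⟨j, h0⟩ = ∑ k ∈ Finset.Iic (⟨j, h0⟩ : Fin n), p ℓs 0 k := hℓs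
      rw [hms]
      linarith
    have hdown : p ℓs 0 ⟨j, h0⟩ ≤ M ⟨j, h0⟩ := by
      cases j with
      | zero =>
          rw [hM ⟨0, h0⟩, hIio0]
          simp only [Finset.sum_empty, sub_zero]
          rw [hℓs, hIic0 (p ℓs 0)]
      | succ i =>
          have h2 : i < n := by omega
          rw [hM ⟨i + 1, h0⟩, hIioIic i h2 h0, hMIic ⟨i, h2⟩]
          have hc : mT ⟨i, h2⟩ ≤ ∑ k ∈ Finset.Iic (⟨i, h2⟩ : Fin n), p ℓs 0 k :=
            Finset.inf'_le _ (Finset.mem_univ ℓs)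
          have hd : ∑ k ∈ Finset.Iic (⟨i + 1, h0⟩ : Fin n), p ℓs 0 k
              = ∑ k ∈ Finset.Iic (⟨i, h2⟩ : Fin n), p ℓs 0 k + p ℓs 0 ⟨i + 1, h0⟩ :=
            hIicsplit (p ℓs 0) i h2 h0
          rw [hℓs, hd]
          linarith
    have hsrt : p ℓs 0 ⟨j + 1, h1⟩ ≤ p ℓs 0 ⟨j, h0⟩ := by
      apply hsort ℓs
      rw [Fin.le_def]
      simp
    linarith
  -- the ℕ-indexed distribution b
  set b : ℕ → ℝ := fun s => if hs : 1 ≤ s ∧ s ≤ n then M ⟨s - 1, by omega⟩ else 0 with hb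
  have hbval : ∀ (s : ℕ) (h1 : 1 ≤ s) (h2 : s ≤ n) (hlt : s - 1 < n),
      b s = M ⟨s - 1, hlt⟩ := by
    intro s h1 h2 hlt
    rw [hb]
    simp only
    rw [dif_pos ⟨h1, h2⟩]
  have hb0 : ∀ s, 0 ≤ b s := by
    intro s
    rw [hb]
    simp only
    split_ifs with h
    · exact hMnn _
    · exact le_refl 0
  have hbzero : ∀ s, n < s → b s = 0 := by
    intro s hs
    rw [hb]
    simp only
    rw [dif_neg (by omega)]
  have hbtop : b (n + 1) = 0 := hbzero (n + 1) (by omega)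
  have hbmono : ∀ s, 1 ≤ s → b (s + 1) ≤ b s := by
    intro s hs1
    by_cases h2 : s + 1 ≤ n
    · have e1 : b (s + 1) = M ⟨s, by omega⟩ := by
        have he := hbval (s + 1) (by omega) h2 (by omega)
        simpa using he
      have e2 : b s = M ⟨s - 1, by omega⟩ := hbval s hs1 (by omega) (by omega)
      rw [e1, e2]
      have h5 := hMmono (s - 1) (by omega) (by omega)
      have hss : s - 1 + 1 = s := by omega
      simp only [hss] at h5
      exact h5
    · have e1 : b (s + 1) = 0 := hbzero (s + 1) (by omega)
      rw [e1]
      exact hb0 s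
  have hBfM : ∀ (s : ℕ) (h2 : s + 1 ≤ n),
      Bf b (s + 1) = ∑ k ∈ Finset.Iic (⟨s, by omega⟩ : Fin n), M k := by
    intro s
    induction s with
    | zero =>
        intro h2
        rw [Bf_succ, Bf_zero, zero_add, hIic0 M]
        exact hbval 1 (by omega) (by omega) (by omega)
    | succ k ih =>
        intro h2
        rw [Bf_succ, ih (by omega), hIicsplit M k (by omega) (by omega)]
        congr 1
        have he := hbval (k + 2) (by omega) (by omega) (by omega)
        simpa using he
  have hB1 : Bf b n = 1 := by
    have hx : Bf b n = ∑ k ∈ Finset.Iic (⟨n - 1, by omega⟩ : Fin n), M k := by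
      obtain ⟨k, rfl⟩ : ∃ k, n = k + 1 := ⟨n - 1, by omega⟩
      have hy := hBfM k le_rfl
      simpa using hy
    rw [hx, hMIic ⟨n - 1, by omega⟩]
    have huniv : Finset.Iic (⟨n - 1, by omega⟩ : Fin n) = univ := by
      ext x
      simp only [Finset.mem_Iic, Finset.mem_univ, iff_true, Fin.le_def]
      omega
    show (univ.inf' univ_nonempty fun ℓ => ∑ j ∈ Iic (⟨n - 1, by omega⟩ : Fin n), p ℓ 0 j) = 1
    rw [huniv]
    have hcst : (fun ℓ => ∑ j ∈ univ, p ℓ 0 j) = fun _ : Fin m => (1:ℝ) := by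
      funext ℓ
      exact hsum ℓ
    rw [hcst, Finset.inf'_const]
  have hkeyB : ∀ t s, 1 ≤ s → s ≤ n →
      Bf b s - ∑ u ∈ range t, G u ≤ (s : ℝ) * G t := by
    intro t s h1 h2
    obtain ⟨k, rfl⟩ : ∃ k, s = k + 1 := ⟨s - 1, by omega⟩
    rw [hBfM k (by omega), hMIic ⟨k, by omega⟩]
    have hkk := hkey t ⟨k, by omega⟩
    simp only [Fin.val_mk] at hkk
    have hc : (((k : ℕ) : ℝ) + 1) = (((k + 1 : ℕ)) : ℝ) := by push_cast; ring
    rw [hc] at hkk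
    exact hkk
  have hcore := core_lemma n hnpos b hb0 hbmono hbtop hB1 G hGnn hg1 hkeyB
  have hlog2pos : 0 < Real.log 2 := Real.log_pos one_lt_two
  have hlb : ∀ x : ℝ, Real.logb 2 x = Real.log x / Real.log 2 := fun _ => rfl
  have hsum_b : ∑ s ∈ Icc 1 n, (b s * Real.log (b s)⁻¹ + b s)
      = (∑ i, M i * Real.log (M i)⁻¹) + 1 := by
    rw [Finset.sum_add_distrib]
    have h2 : ∑ s ∈ Icc 1 n, b s = 1 := hB1
    rw [h2]
    congr 1
    refine Finset.sum_bij' (fun u hu => (⟨u - 1, by rw [Finset.mem_Icc] at hu; omega⟩ : Fin n))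
      (fun i _ => (i : ℕ) + 1) ?_ ?_ ?_ ?_ ?_
    · intro a ha
      exact Finset.mem_univ _
    · intro a ha
      have hlt := a.isLt
      simp only [Finset.mem_Icc]
      omega
    · intro a ha
      simp only [Finset.mem_Icc] at ha
      simp only [Fin.val_mk]
      omega
    · intro a ha
      apply Fin.ext
      simp
    · intro a ha
      rw [Finset.mem_Icc] at ha
      rw [hbval a ha.1 ha.2 (by omega)]
  apply Real.tsum_le_of_sum_range_le
  · intro t
    rcases eq_or_lt_of_le (hGnn t) with h | h
    · rw [← h]
      simp
    · have hle1 : G t ≤ 1 := by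
        have ha := hg1 (t + 1)
        rw [Finset.sum_range_succ] at ha
        have hb2 : 0 ≤ ∑ u ∈ range t, G u := Finset.sum_nonneg fun u _ => hGnn u
        linarith
      have hmul : G t * (G t)⁻¹ = 1 := mul_inv_cancel₀ (ne_of_gt h)
      have hipos : 0 < (G t)⁻¹ := inv_pos.mpr h
      have hinv : 1 ≤ (G t)⁻¹ := by nlinarith
      exact mul_nonneg (le_of_lt h) (Real.logb_nonneg one_lt_two hinv)
  · intro T
    have h1 : ∑ t ∈ range T, G t * Real.logb 2 (G t)⁻¹
        = (∑ t ∈ range T, G t * Real.log (G t)⁻¹) / Real.log 2 := by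
      rw [Finset.sum_div]
      apply Finset.sum_congr rfl
      intro t _
      rw [hlb, mul_div_assoc]
    have h2 : (∑ i, M i * Real.logb 2 (M i)⁻¹) + Real.logb 2 (Real.exp 1)
        = ((∑ i, M i * Real.log (M i)⁻¹) + 1) / Real.log 2 := by
      rw [add_div]
      congr 1
      · rw [Finset.sum_div]
        apply Finset.sum_congr rfl
        intro i _
        rw [hlb, mul_div_assoc]
      · rw [hlb, Real.log_exp]
    rw [h1, h2]
    rw [div_le_div_iff_of_pos_right hlog2pos]
    rw [← hsum_b]
    exact hcore T
end

section
/- Let S = {p₁,…,p_m} be a finite set of probability distributions, each on n states with values sorted nonincreasingly, let G_S be the greedy coupling output sequence, and for an integer z ≥ 2 let M_S^{1/z} be the distribution obtained by multiplying ∧S with Geom_{1/z}. Then M_S^{1/z} ≼_{z−1} G_S, i.e., M_S^{1/z} is (z−1)-strongly majorized by G_S. -/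
/-!
Put `θ = (z - 1) Mz i` and stop the greedy process at the last step `j` with `G j ≥ θ`. A
distribution `p_ℓ` attaining the minimum at step `j + 1` has all residual entries below `θ`, so
the mass emitted so far is at least `∑ₖ (p_ℓ(k) - θ)⁺`, which dominates `∑ₖ (M k - θ)⁺` by
Karamata's inequality, as `∧S` is majorized by `p_ℓ`. On the other side, the terms of `M_S^{1/z}`
that are at least `Mz i` and split off from `M k` form an initial run of its geometric split;
the remaining tail has mass at least `(1 - 1/z)/(1/z) · Mz i = θ`, so the first `i + 1` terms
sum to at most `∑ₖ (M k - θ)⁺`.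
-/

open Finset

section Majorization

variable {ι : Type*} [LinearOrder ι] [Fintype ι] [LocallyFiniteOrderBot ι]

/-- Karamata's inequality for the convex nondecreasing functions `x ↦ (x - g)⁺`: the set where
an antitone `a` exceeds `g` is an initial segment, on which `b` has at least the mass of `a`. -/
theorem sum_posPart_sub_le_of_sum_Iic_le {a b : ι → ℝ} (ha : Antitone a)
    (hab : ∀ i, ∑ j ∈ Iic i, a j ≤ ∑ j ∈ Iic i, b j) (g : ℝ) :
    ∑ k, (a k - g)⁺ ≤ ∑ k, (b k - g)⁺ := by
  set A := univ.filter fun k => g < a k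
  have hsplit : ∑ k, (a k - g)⁺ = ∑ k ∈ A, (a k - g) := by
    rw [sum_filter]
    refine sum_congr rfl fun k _ => ?_
    split_ifs with h
    · exact posPart_eq_self.2 (by linarith)
    · exact posPart_eq_zero.2 (by linarith)
  rcases A.eq_empty_or_nonempty with hA | hA
  · rw [hsplit, hA, sum_empty]
    exact sum_nonneg fun k _ => posPart_nonneg _
  set c := A.max' hA
  have hAc : A = Iic c := by
    ext k
    simp only [A, mem_filter, mem_univ, true_and, mem_Iic]
    refine ⟨fun hk => le_max' A k (by simpa [A] using hk), fun hk => ?_⟩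
    exact ((mem_filter.1 (max'_mem A hA)).2).trans_le (ha hk)
  calc ∑ k, (a k - g)⁺ = ∑ k ∈ Iic c, (a k - g) := by rw [hsplit, hAc]
    _ ≤ ∑ k ∈ Iic c, (b k - g) := by simp only [sum_sub_distrib]; linarith [hab c]
    _ ≤ ∑ k ∈ Iic c, (b k - g)⁺ := sum_le_sum fun k _ => le_posPart _
    _ ≤ ∑ k, (b k - g)⁺ :=
      sum_le_sum_of_subset_of_nonneg (subset_univ _) fun k _ _ => posPart_nonneg _

end Majorization

section Meet

variable {κ ι : Type*} [Fintype κ] [Nonempty κ] [LinearOrder ι] [LocallyFiniteOrderBot ι]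

def IsMajorizationMeet (q : κ → ι → ℝ) (M : ι → ℝ) : Prop :=
  ∀ i, M i = (univ.inf' univ_nonempty fun ℓ => ∑ j ∈ Iic i, q ℓ j) - ∑ j ∈ Iio i, M j

namespace IsMajorizationMeet

variable {q : κ → ι → ℝ} {M : ι → ℝ}

theorem sum_Iic_eq (hM : IsMajorizationMeet q M) (i : ι) :
    ∑ j ∈ Iic i, M j = univ.inf' univ_nonempty fun ℓ => ∑ j ∈ Iic i, q ℓ j := by
  rw [← add_sum_Iio_eq_sum_Iic, hM i, sub_add_cancel]

theorem sum_Iic_le (hM : IsMajorizationMeet q M) (i : ι) (ℓ : κ) :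
    ∑ j ∈ Iic i, M j ≤ ∑ j ∈ Iic i, q ℓ j :=
  hM.sum_Iic_eq i ▸ inf'_le _ (mem_univ ℓ)

theorem exists_sum_Iic_eq (hM : IsMajorizationMeet q M) (i : ι) :
    ∃ ℓ, ∑ j ∈ Iic i, M j = ∑ j ∈ Iic i, q ℓ j := by
  obtain ⟨ℓ, -, hℓ⟩ := exists_mem_eq_inf' univ_nonempty fun ℓ => ∑ j ∈ Iic i, q ℓ j
  exact ⟨ℓ, (hM.sum_Iic_eq i).trans hℓ⟩

theorem sum_eq [Fintype ι] [Nonempty ι] (hM : IsMajorizationMeet q M) {c : ℝ}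
    (hq : ∀ ℓ, ∑ k, q ℓ k = c) : ∑ k, M k = c := by
  have huniv : (univ : Finset ι) = Iic (univ.max' univ_nonempty) := by
    ext k; simp [le_max']
  obtain ⟨ℓ, hℓ⟩ := hM.exists_sum_Iic_eq (univ.max' univ_nonempty)
  rw [huniv, hℓ, ← huniv, hq]

variable [PredOrder ι]

theorem exists_sum_Iio_eq (hM : IsMajorizationMeet q M) (i : ι) :
    ∃ ℓ, ∑ j ∈ Iio i, M j = ∑ j ∈ Iio i, q ℓ j := by
  by_cases hi : IsMin i
  · simp [Iio_eq_empty.2 hi]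
  · rw [← Iic_pred_eq_Iio_of_not_isMin hi]
    exact hM.exists_sum_Iic_eq _

theorem sum_Iio_le (hM : IsMajorizationMeet q M) (i : ι) (ℓ : κ) :
    ∑ j ∈ Iio i, M j ≤ ∑ j ∈ Iio i, q ℓ j := by
  by_cases hi : IsMin i
  · simp [Iio_eq_empty.2 hi]
  · rw [← Iic_pred_eq_Iio_of_not_isMin hi]
    exact hM.sum_Iic_le _ ℓ

theorem exists_le_apply (hM : IsMajorizationMeet q M) (i : ι) : ∃ ℓ, q ℓ i ≤ M i := by
  obtain ⟨ℓ, hℓ⟩ := hM.exists_sum_Iic_eq i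
  have := hM.sum_Iio_le i ℓ
  rw [← add_sum_Iio_eq_sum_Iic, ← add_sum_Iio_eq_sum_Iic] at hℓ
  exact ⟨ℓ, by linarith⟩

theorem nonneg (hM : IsMajorizationMeet q M) (hq : ∀ ℓ k, 0 ≤ q ℓ k) (i : ι) : 0 ≤ M i :=
  let ⟨ℓ, hℓ⟩ := hM.exists_le_apply i
  (hq ℓ i).trans hℓ

/-- A family `ℓ` that attains the minimal prefix sum over `Iio i = Iic (pred i)` gives both
`M i ≤ q ℓ i` and `q ℓ (pred i) ≤ M (pred i)`. -/
theorem antitone [IsPredArchimedean ι] (hM : IsMajorizationMeet q M)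
    (hq : ∀ ℓ, Antitone (q ℓ)) : Antitone M := by
  refine antitone_of_le_pred fun i hi => ?_
  obtain ⟨ℓ, hℓ⟩ := hM.exists_sum_Iio_eq i
  have hup := hM.sum_Iic_le i ℓ
  have hlow := hM.sum_Iio_le (Order.pred i) ℓ
  rw [← add_sum_Iio_eq_sum_Iic, ← add_sum_Iio_eq_sum_Iic] at hup
  have hpred := hℓ
  rw [← Iic_pred_eq_Iio_of_not_isMin hi, ← add_sum_Iio_eq_sum_Iic,
    ← add_sum_Iio_eq_sum_Iic] at hpred
  linarith [hq ℓ (Order.pred_le i)]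

end IsMajorizationMeet

end Meet

section Greedy

variable {κ ι : Type*} [Fintype κ] [Nonempty κ] [Fintype ι] [Nonempty ι] [DecidableEq ι]

structure IsGreedyCoupling (p : κ → ℕ → ι → ℝ) (G : ℕ → ℝ) : Prop where
  output_eq : ∀ t, G t = univ.inf' univ_nonempty fun ℓ => univ.sup' univ_nonempty (p ℓ t)
  step : ∀ t ℓ, ∃ k, (∀ k', p ℓ t k' ≤ p ℓ t k) ∧
    p ℓ (t + 1) = Function.update (p ℓ t) k (p ℓ t k - G t)

namespace IsGreedyCoupling

variable {p : κ → ℕ → ι → ℝ} {G : ℕ → ℝ}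

theorem output_le_sup' (h : IsGreedyCoupling p G) (t : ℕ) (ℓ : κ) :
    G t ≤ univ.sup' univ_nonempty (p ℓ t) :=
  h.output_eq t ▸ inf'_le _ (mem_univ ℓ)

theorem sum_residual_succ (h : IsGreedyCoupling p G) (t : ℕ) (ℓ : κ) :
    ∑ k, p ℓ (t + 1) k = ∑ k, p ℓ t k - G t := by
  obtain ⟨k, -, hk⟩ := h.step t ℓ
  rw [hk, sum_update_of_mem (mem_univ k),
    sum_eq_add_sum_sdiff_singleton_of_mem (mem_univ k) (p ℓ t)]
  ring

theorem sum_residual (h : IsGreedyCoupling p G) (t : ℕ) (ℓ : κ) :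
    ∑ k, p ℓ t k = ∑ k, p ℓ 0 k - ∑ s ∈ range t, G s := by
  induction t with
  | zero => simp
  | succ t ih => rw [h.sum_residual_succ, ih, sum_range_succ]; ring

theorem residual_nonneg (h : IsGreedyCoupling p G) (hp : ∀ ℓ k, 0 ≤ p ℓ 0 k) (t : ℕ) :
    ∀ ℓ k, 0 ≤ p ℓ t k := by
  induction t with
  | zero => exact hp
  | succ t ih =>
    intro ℓ k
    obtain ⟨k₀, hk₀, hstep⟩ := h.step t ℓ
    rw [hstep]
    rcases eq_or_ne k k₀ with rfl | hne
    · rw [Function.update_self, sub_nonneg]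
      exact (h.output_le_sup' t ℓ).trans (sup'_le _ _ fun k' _ => hk₀ k')
    · rw [Function.update_of_ne hne]
      exact ih ℓ k

theorem output_nonneg (h : IsGreedyCoupling p G) (hp : ∀ ℓ k, 0 ≤ p ℓ 0 k) (t : ℕ) :
    0 ≤ G t := by
  obtain ⟨k⟩ := ‹Nonempty ι›
  rw [h.output_eq t]
  exact le_inf' _ _ fun ℓ _ => (h.residual_nonneg hp t ℓ k).trans (le_sup' _ (mem_univ k))

theorem residual_antitone (h : IsGreedyCoupling p G) (hp : ∀ ℓ k, 0 ≤ p ℓ 0 k) (ℓ : κ)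
    (k : ι) : Antitone fun t => p ℓ t k := by
  refine antitone_nat_of_succ_le fun t => ?_
  obtain ⟨k₀, -, hstep⟩ := h.step t ℓ
  rw [hstep]
  rcases eq_or_ne k k₀ with rfl | hne
  · simpa using h.output_nonneg hp t
  · rw [Function.update_of_ne hne]

theorem tendsto_output_atTop_zero (h : IsGreedyCoupling p G) (hp : ∀ ℓ k, 0 ≤ p ℓ 0 k) :
    Filter.Tendsto G Filter.atTop (nhds 0) := by
  obtain ⟨ℓ⟩ := ‹Nonempty κ›
  refine (summable_of_sum_range_le (c := ∑ k, p ℓ 0 k) (h.output_nonneg hp) fun t => ?_)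
    |>.tendsto_atTop_zero
  have := sum_nonneg fun k (_ : k ∈ univ) => h.residual_nonneg hp t ℓ k
  linarith [h.sum_residual t ℓ]

/-- A distribution `ℓ` realising the minimum in `G t` has all residual entries at most `G t`, so
everything of `p ℓ 0` above the level `G t` has already been emitted. -/
theorem exists_sum_posPart_sub_output_le (h : IsGreedyCoupling p G)
    (hp : ∀ ℓ k, 0 ≤ p ℓ 0 k) (t : ℕ) :
    ∃ ℓ, ∑ k, (p ℓ 0 k - G t)⁺ ≤ ∑ s ∈ range t, G s := by
  obtain ⟨ℓ, -, hℓ⟩ := exists_mem_eq_inf' univ_nonempty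
    fun ℓ => univ.sup' univ_nonempty (p ℓ t)
  refine ⟨ℓ, ?_⟩
  have hres : ∀ k, p ℓ t k ≤ G t := fun k => h.output_eq t ▸ hℓ ▸ le_sup' _ (mem_univ k)
  calc ∑ k, (p ℓ 0 k - G t)⁺ ≤ ∑ k, (p ℓ 0 k - p ℓ t k) := by
        refine sum_le_sum fun k _ => sup_le ?_ ?_
        · linarith [hres k]
        · linarith [h.residual_antitone hp ℓ k (Nat.zero_le t)]
    _ = ∑ s ∈ range t, G s := by rw [sum_sub_distrib, h.sum_residual t ℓ]; ring

end IsGreedyCoupling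

end Greedy

section GreedyMeet

variable {κ ι : Type*} [Fintype κ] [Nonempty κ] [LinearOrder ι] [Fintype ι] [Nonempty ι]
  [LocallyFiniteOrderBot ι] [DecidableEq ι] {p : κ → ℕ → ι → ℝ} {G : ℕ → ℝ} {M : ι → ℝ}

namespace IsGreedyCoupling

theorem sum_posPart_sub_output_le (h : IsGreedyCoupling p G) (hp : ∀ ℓ k, 0 ≤ p ℓ 0 k)
    (hM : IsMajorizationMeet (fun ℓ => p ℓ 0) M) (hManti : Antitone M) (t : ℕ) :
    ∑ k, (M k - G t)⁺ ≤ ∑ s ∈ range t, G s := by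
  obtain ⟨ℓ, hℓ⟩ := h.exists_sum_posPart_sub_output_le hp t
  exact (sum_posPart_sub_le_of_sum_Iic_le hManti (fun i => hM.sum_Iic_le i ℓ) (G t)).trans hℓ

/-- Stop at the last step `j` whose output is still at least `θ`: it exists because the outputs
tend to `0` while `G 0` dominates every value of `M`. -/
theorem exists_le_output_and_sum_posPart_le (h : IsGreedyCoupling p G)
    (hp : ∀ ℓ k, 0 ≤ p ℓ 0 k) (hM : IsMajorizationMeet (fun ℓ => p ℓ 0) M)
    (hManti : Antitone M) {θ : ℝ} (hθ : 0 < θ) {a : ι} (ha : θ ≤ M a) :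
    ∃ j, θ ≤ G j ∧ ∑ k, (M k - θ)⁺ ≤ ∑ s ∈ range (j + 1), G s := by
  have hsmall : ∃ t, G t < θ := ((h.tendsto_output_atTop_zero hp).eventually_lt_const hθ).exists
  have hfirst : Nat.find hsmall ≠ 0 := by
    intro h0
    have hG0 : M a - G 0 ≤ 0 := by
      have := h.sum_posPart_sub_output_le hp hM hManti 0
      rw [sum_range_zero] at this
      exact (le_posPart _).trans
        ((single_le_sum (fun k _ => posPart_nonneg _) (mem_univ a)).trans this)
    linarith [h0 ▸ Nat.find_spec hsmall]
  obtain ⟨j, hj⟩ := Nat.exists_eq_succ_of_ne_zero hfirst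
  refine ⟨j, not_lt.1 (Nat.find_min hsmall (by omega)), ?_⟩
  calc ∑ k, (M k - θ)⁺ ≤ ∑ k, (M k - G (j + 1))⁺ := by
        refine sum_le_sum fun k _ => posPart_mono ?_
        linarith [hj ▸ Nat.find_spec hsmall]
    _ ≤ ∑ s ∈ range (j + 1), G s := h.sum_posPart_sub_output_le hp hM hManti (j + 1)

end IsGreedyCoupling

end GreedyMeet

section Geometric

variable {γ : ℝ}

theorem one_sub_div_mul_geom (hγ : γ ≠ 0) (t : ℕ) :
    (1 - γ) / γ * (γ * (1 - γ) ^ t) = (1 - γ) ^ (t + 1) := by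
  field_simp
  ring

theorem sum_range_geom_weight (γ : ℝ) (c : ℕ) :
    ∑ t ∈ range c, γ * (1 - γ) ^ t = 1 - (1 - γ) ^ c := by
  rw [← mul_sum, ← mul_neg_geom_sum]
  ring

theorem mul_geom_weight_le (hγ₀ : 0 < γ) (hγ₁ : γ ≤ 1) {a : ℝ} (ha : 0 ≤ a) (t : ℕ) :
    (1 - γ) / γ * (a * (γ * (1 - γ) ^ t)) ≤ a := by
  rw [mul_left_comm, one_sub_div_mul_geom hγ₀.ne']
  exact mul_le_of_le_one_right ha (pow_le_one₀ (by linarith) (by linarith))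

/-- If every weight `a γ (1-γ)^t` with `t ∈ F` is at least `v`, then `F ⊆ range (c + 1)` for the
largest such `t = c`, and the geometric tail beyond `c` has mass `a (1-γ)^(c+1) ≥ (1-γ)/γ · v`. -/
theorem sum_mul_geom_weight_le (hγ₀ : 0 < γ) (hγ₁ : γ ≤ 1) {a v : ℝ} (ha : 0 ≤ a)
    {F : Finset ℕ} (hF : ∀ t ∈ F, v ≤ a * (γ * (1 - γ) ^ t)) :
    ∑ t ∈ F, a * (γ * (1 - γ) ^ t) ≤ (a - (1 - γ) / γ * v)⁺ := by
  rcases F.eq_empty_or_nonempty with rfl | hF₀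
  · simp
  set c := F.max' hF₀
  have hsub : F ⊆ range (c + 1) := fun t ht => mem_range.2 (Nat.lt_succ_of_le (le_max' F t ht))
  have htail : (1 - γ) / γ * v ≤ a * (1 - γ) ^ (c + 1) := by
    calc (1 - γ) / γ * v ≤ (1 - γ) / γ * (a * (γ * (1 - γ) ^ c)) :=
          mul_le_mul_of_nonneg_left (hF c (max'_mem F hF₀)) (by bound)
      _ = a * (1 - γ) ^ (c + 1) := by rw [mul_left_comm, one_sub_div_mul_geom hγ₀.ne']
  calc ∑ t ∈ F, a * (γ * (1 - γ) ^ t) ≤ ∑ t ∈ range (c + 1), a * (γ * (1 - γ) ^ t) :=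
        sum_le_sum_of_subset_of_nonneg hsub fun t _ _ => by bound
    _ = a - a * (1 - γ) ^ (c + 1) := by rw [← mul_sum, sum_range_geom_weight]; ring
    _ ≤ (a - (1 - γ) / γ * v)⁺ := (by linarith : _ ≤ a - (1 - γ) / γ * v).trans (le_posPart _)

theorem sum_prod_mul_geom_weight_le {ι : Type*} [Fintype ι] (hγ₀ : 0 < γ) (hγ₁ : γ ≤ 1)
    {a : ι → ℝ} (ha : ∀ k, 0 ≤ a k) {v : ℝ} {A : Finset (ι × ℕ)}
    (hA : ∀ x ∈ A, v ≤ a x.1 * (γ * (1 - γ) ^ x.2)) :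
    ∑ x ∈ A, a x.1 * (γ * (1 - γ) ^ x.2) ≤ ∑ k, (a k - (1 - γ) / γ * v)⁺ := by
  rw [sum_finset_product A univ
    (fun k => A.preimage (Prod.mk k) (Prod.mk_right_injective k).injOn) (by simp)]
  exact sum_le_sum fun k _ =>
    sum_mul_geom_weight_le hγ₀ hγ₁ (ha k) fun t ht => hA _ (mem_preimage.1 ht)

end Geometric

section Enumeration

variable {ι : Type*} {M : ι → ℝ} {Mz : ℕ → ℝ} (e : ℕ ≃ ι × ℕ)

/-- Positive products `M a * w t` occur at infinitely many positions of the antitone sequence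
`Mz`, so none of its terms vanishes. -/
theorem pos_of_antitone_of_eq_mul {w : ℕ → ℝ} (hw : ∀ t, 0 < w t)
    (hMz : ∀ i, Mz i = M (e i).1 * w (e i).2) (hanti : Antitone Mz) {a : ι} (ha : 0 < M a)
    (i : ℕ) : 0 < Mz i := by
  obtain ⟨t, ht⟩ := ((e.symm.injective.comp (Prod.mk_right_injective a)).nat_tendsto_atTop
    |>.eventually_ge_atTop i).exists
  calc 0 < M a * w t := mul_pos ha (hw t)
    _ = Mz (e.symm (a, t)) := by rw [hMz, Equiv.apply_symm_apply]
    _ ≤ Mz i := hanti ht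

theorem sum_range_le_sum_posPart_of_antitone [Fintype ι] {γ : ℝ} (hγ₀ : 0 < γ) (hγ₁ : γ ≤ 1)
    (hM : ∀ k, 0 ≤ M k) (hMz : ∀ i, Mz i = M (e i).1 * (γ * (1 - γ) ^ (e i).2))
    (hanti : Antitone Mz) (i : ℕ) :
    ∑ k ∈ range (i + 1), Mz k ≤ ∑ k, (M k - (1 - γ) / γ * Mz i)⁺ := by
  calc ∑ k ∈ range (i + 1), Mz k
        = ∑ x ∈ (range (i + 1)).map e.toEmbedding, M x.1 * (γ * (1 - γ) ^ x.2) := by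
          rw [sum_map]; exact sum_congr rfl fun k _ => hMz k
    _ ≤ ∑ k, (M k - (1 - γ) / γ * Mz i)⁺ := by
      refine sum_prod_mul_geom_weight_le hγ₀ hγ₁ hM fun x hx => ?_
      obtain ⟨k, hk, rfl⟩ := mem_map.1 hx
      exact hMz k ▸ hanti (Nat.le_of_lt_succ (mem_range.1 hk))

end Enumeration

/-- **Lemma 2 (strong majorization by the greedy coupling).**
With `G` the greedy coupling output sequence for `S = {p₁,…,p_m}`, `M` the sorted value
sequence of `∧S`, and `Mz` the nonincreasing enumeration (via the bijection `e`) of the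
multiset `{M k · (1/z)(1−1/z)^t : k ∈ Fin n, t ∈ ℕ}` (i.e. `M_S^{1/z} = ∧S × Geom_{1/z}`):
for every integer `z ≥ 2`, `M_S^{1/z} ≼_{z−1} G_S`, i.e. for every index `i` there is `j`
with `∑_{k≤i} Mz k ≤ ∑_{k≤j} G k` and `(z−1)·Mz i ≤ G j`. -/
theorem geometric_split_strongly_majorized_by_greedy
    (m n : ℕ) [NeZero m] [NeZero n]
    (p : Fin m → ℕ → Fin n → ℝ)      -- residuals: `p ℓ t` before step `t`; `p ℓ 0 = p_ℓ`
    (G : ℕ → ℝ)                       -- greedy output sequence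
    (M : Fin n → ℝ)                   -- sorted values of ∧S
    (hsort : ∀ ℓ, Antitone (p ℓ 0))
    (hpos : ∀ ℓ k, 0 ≤ p ℓ 0 k)
    (hsum : ∀ ℓ, ∑ k, p ℓ 0 k = 1)
    (hG : ∀ t, G t = univ.inf' univ_nonempty fun ℓ => univ.sup' univ_nonempty (p ℓ t))
    (hstep : ∀ t ℓ, ∃ k, (∀ k', p ℓ t k' ≤ p ℓ t k) ∧
      p ℓ (t + 1) = Function.update (p ℓ t) k (p ℓ t k - G t))
    (hM : ∀ i, M i =
      (univ.inf' univ_nonempty fun ℓ => ∑ j ∈ Iic i, p ℓ 0 j) - ∑ j ∈ Iio i, M j)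
    (z : ℕ) (hz : 2 ≤ z)
    (Mz : ℕ → ℝ) (e : ℕ ≃ Fin n × ℕ)
    (hMz : ∀ i, Mz i = M (e i).1 * ((1 / (z : ℝ)) * (1 - 1 / (z : ℝ)) ^ (e i).2))
    (hMzsort : Antitone Mz) :
    ∀ i : ℕ, ∃ j : ℕ,
      (∑ k ∈ Finset.range (i + 1), Mz k ≤ ∑ k ∈ Finset.range (j + 1), G k) ∧
      ((z : ℝ) - 1) * Mz i ≤ G j := by
  intro i
  have hzR : (2 : ℝ) ≤ z := by exact_mod_cast hz
  have hγ₀ : 0 < 1 / (z : ℝ) := by positivity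
  have hγ₁ : 1 / (z : ℝ) < 1 := (div_lt_one (by positivity)).2 (by linarith)
  have hzγ : (1 - 1 / (z : ℝ)) / (1 / z) = z - 1 := by field_simp
  have hgreedy : IsGreedyCoupling p G := ⟨hG, hstep⟩
  have hmeet : IsMajorizationMeet (fun ℓ => p ℓ 0) M := hM
  have hMnn := hmeet.nonneg hpos
  have hManti := hmeet.antitone hsort
  obtain ⟨a, -, ha⟩ : ∃ a ∈ univ, (0 : Fin n → ℝ) a < M a :=
    exists_lt_of_sum_lt (by simp [hmeet.sum_eq hsum])
  have hMzi : 0 < Mz i :=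
    pos_of_antitone_of_eq_mul e (fun t => mul_pos hγ₀ (pow_pos (by linarith) t)) hMz hMzsort ha i
  have hθ : ((z : ℝ) - 1) * Mz i ≤ M (e i).1 := by
    rw [← hzγ, hMz]; exact mul_geom_weight_le hγ₀ hγ₁.le (hMnn _) _
  obtain ⟨j, hj, hmass⟩ :=
    hgreedy.exists_le_output_and_sum_posPart_le hpos hmeet hManti
      (mul_pos (by linarith) hMzi) hθ
  have hsplit := sum_range_le_sum_posPart_of_antitone e hγ₀ hγ₁.le hMnn hMz hMzsort i
  rw [hzγ] at hsplit
  exact ⟨j, hsplit.trans hmass, hj⟩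
end

section
/- Let S = {p₁,…,p_m} be a finite set of probability distributions, each on n states with values sorted nonincreasingly, let G_S be the greedy coupling output sequence, let z ≥ 2 be an integer, and let M_S^{1/z} be the distribution obtained by multiplying ∧S with Geom_{1/z}. For any indices i′, j′: if ∑_{k=1}^{j′} G_S(k) < ∑_{k=1}^{i′} M_S^{1/z}(k), then G_S(j′+1) ≥ (z−1)·M_S^{1/z}(i′). -/
/-!
Let `a = M^{1/z}(i')` and `c = (z - 1) a`, and suppose `G(j') < c`. Then some distribution `p_ℓ`
has all its residuals below `c` after `j'` steps, so the greedy coupling has already removed at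
least `∑_{k ∈ K} (p_ℓ(k) - c)` from it for every set of states `K`, and hence at least
`∑_{k ∈ K} (M(k) - c)` when `K` is an initial segment, since the prefix sums of `∧S` are those of
the pointwise minimum. Take `K = {k | z a ≤ M(k)}`, an initial segment because `M` is sorted.
The entries of `M^{1/z}` that are at least `a` and come from state `k` are
`M(k)/z · (1 - 1/z)^t` for `t ≤ τ`, with `M(k)/z · (1 - 1/z)^τ ≥ a`; they sum to
`M(k) (1 - (1 - 1/z)^(τ+1)) ≤ M(k) - c`. So the first `i' + 1` entries of `M^{1/z}`, all at least
`a`, sum to at most `∑_{k ∈ K} (M(k) - c) ≤ ∑_{t < j'} G(t)`, a contradiction.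
-/

open Finset

theorem sum_Iic_eq_add_sum_Iio {κ : Type*} [LinearOrder κ] [LocallyFiniteOrderBot κ]
    (f : κ → ℝ) (i : κ) : ∑ j ∈ Iic i, f j = f i + ∑ j ∈ Iio i, f j := by
  rw [← Iio_insert, sum_insert (by simp)]

section Greedy

variable {ι κ : Type*} [Fintype ι] [Nonempty ι] [Fintype κ] [Nonempty κ] [DecidableEq κ]

/-- `p ℓ t` is the residual of the `ℓ`-th distribution before step `t`. -/
structure IsGreedyRun (p : ι → ℕ → κ → ℝ) (G : ℕ → ℝ) : Prop where
  output_eq : ∀ t, G t = univ.inf' univ_nonempty fun ℓ => univ.sup' univ_nonempty (p ℓ t)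
  step : ∀ t ℓ, ∃ k, (∀ k', p ℓ t k' ≤ p ℓ t k) ∧
    p ℓ (t + 1) = Function.update (p ℓ t) k (p ℓ t k - G t)

namespace IsGreedyRun

variable {p : ι → ℕ → κ → ℝ} {G : ℕ → ℝ}

theorem output_le_of_isMax (h : IsGreedyRun p G) {t : ℕ} {ℓ : ι} {k : κ}
    (hk : ∀ k', p ℓ t k' ≤ p ℓ t k) : G t ≤ p ℓ t k := by
  rw [h.output_eq t]
  exact (inf'_le _ (mem_univ ℓ)).trans (sup'_le _ _ fun k' _ => hk k')

theorem residual_nonneg (h : IsGreedyRun p G) (h0 : ∀ ℓ k, 0 ≤ p ℓ 0 k) (t : ℕ) (ℓ : ι)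
    (k : κ) : 0 ≤ p ℓ t k := by
  induction t generalizing k with
  | zero => exact h0 ℓ k
  | succ t ih =>
    obtain ⟨k₀, hk₀, hupd⟩ := h.step t ℓ
    rw [hupd]
    rcases eq_or_ne k k₀ with rfl | hne
    · simpa using h.output_le_of_isMax hk₀
    · rw [Function.update_of_ne hne]
      exact ih k

theorem output_nonneg (h : IsGreedyRun p G) (h0 : ∀ ℓ k, 0 ≤ p ℓ 0 k) (t : ℕ) : 0 ≤ G t := by
  rw [h.output_eq t]
  exact le_inf' _ _ fun ℓ _ =>
    (h.residual_nonneg h0 t ℓ (Classical.arbitrary κ)).trans (le_sup' _ (mem_univ _))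

theorem antitone_residual (h : IsGreedyRun p G) (h0 : ∀ ℓ k, 0 ≤ p ℓ 0 k) (ℓ : ι) (k : κ) :
    Antitone fun t => p ℓ t k := by
  refine antitone_nat_of_succ_le fun t => ?_
  obtain ⟨k₀, -, hupd⟩ := h.step t ℓ
  rw [hupd]
  rcases eq_or_ne k k₀ with rfl | hne
  · simpa using h.output_nonneg h0 t
  · rw [Function.update_of_ne hne]

theorem sum_range_output (h : IsGreedyRun p G) (t : ℕ) (ℓ : ι) :
    ∑ s ∈ range t, G s = ∑ k, (p ℓ 0 k - p ℓ t k) := by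
  induction t with
  | zero => simp
  | succ t ih =>
    obtain ⟨k₀, -, hupd⟩ := h.step t ℓ
    have hmass : ∑ k, p ℓ (t + 1) k = ∑ k, p ℓ t k - G t := by
      rw [hupd, sum_update_of_mem (mem_univ k₀),
        sum_eq_add_sum_sdiff_singleton_of_mem (mem_univ k₀) (p ℓ t)]
      ring
    rw [sum_range_succ, ih, sum_sub_distrib, sum_sub_distrib, hmass]
    ring

theorem exists_sum_sub_le_sum_range_output (h : IsGreedyRun p G) (h0 : ∀ ℓ k, 0 ≤ p ℓ 0 k)
    {t : ℕ} {c : ℝ} (hc : G t < c) :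
    ∃ ℓ, ∀ K : Finset κ, ∑ k ∈ K, (p ℓ 0 k - c) ≤ ∑ s ∈ range t, G s := by
  rw [h.output_eq t, inf'_lt_iff] at hc
  obtain ⟨ℓ, -, hℓ⟩ := hc
  refine ⟨ℓ, fun K => ?_⟩
  rw [h.sum_range_output t ℓ]
  calc ∑ k ∈ K, (p ℓ 0 k - c)
      ≤ ∑ k ∈ K, (p ℓ 0 k - p ℓ t k) :=
        sum_le_sum fun k _ => by linarith [(sup'_lt_iff _).1 hℓ k (mem_univ k)]
    _ ≤ ∑ k, (p ℓ 0 k - p ℓ t k) :=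
        sum_le_sum_of_subset_of_nonneg (subset_univ K) fun k _ _ =>
          sub_nonneg.2 (h.antitone_residual h0 ℓ k (Nat.zero_le t))

end IsGreedyRun

end Greedy

section Meet

variable {ι κ : Type*} [Fintype ι] [Nonempty ι] [LinearOrder κ] [LocallyFiniteOrderBot κ]

/-- `M` lists the values of the meet `∧S` of the distributions `q ℓ`. -/
def IsMeet (q : ι → κ → ℝ) (M : κ → ℝ) : Prop :=
  ∀ i, M i = (univ.inf' univ_nonempty fun ℓ => ∑ j ∈ Iic i, q ℓ j) - ∑ j ∈ Iio i, M j

namespace IsMeet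

variable {q : ι → κ → ℝ} {M : κ → ℝ}

theorem sum_Iic (hM : IsMeet q M) (i : κ) :
    ∑ j ∈ Iic i, M j = univ.inf' univ_nonempty fun ℓ => ∑ j ∈ Iic i, q ℓ j := by
  rw [sum_Iic_eq_add_sum_Iio, hM i]
  ring

theorem sum_le_of_isLowerSet (hM : IsMeet q M) {K : Finset κ} (hK : IsLowerSet (K : Set κ))
    (ℓ : ι) : ∑ k ∈ K, M k ≤ ∑ k ∈ K, q ℓ k := by
  rcases K.eq_empty_or_nonempty with rfl | hne
  · simp
  have hK_eq : K = Iic (K.max' hne) := by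
    ext k
    exact ⟨fun hk => mem_Iic.2 (K.le_max' k hk), fun hk => hK (mem_Iic.1 hk) (K.max'_mem hne)⟩
  rw [hK_eq, hM.sum_Iic]
  exact inf'_le _ (mem_univ ℓ)

theorem exists_eq_sum_Iic_and_le (hM : IsMeet q M) (i : κ) :
    ∃ ℓ, ∑ j ∈ Iic i, q ℓ j = ∑ j ∈ Iic i, M j ∧ q ℓ i ≤ M i := by
  obtain ⟨ℓ, -, hℓ⟩ := exists_mem_eq_inf' univ_nonempty fun ℓ => ∑ j ∈ Iic i, q ℓ j
  refine ⟨ℓ, by rw [hM.sum_Iic, hℓ], ?_⟩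
  have hIio := hM.sum_le_of_isLowerSet (K := Iio i) (by simpa using isLowerSet_Iio i) ℓ
  have hIic := hM.sum_Iic i
  rw [hℓ, sum_Iic_eq_add_sum_Iio, sum_Iic_eq_add_sum_Iio] at hIic
  linarith

theorem antitone [SuccOrder κ] [IsSuccArchimedean κ] (hM : IsMeet q M)
    (hq : ∀ ℓ, Antitone (q ℓ)) : Antitone M := by
  refine antitone_of_succ_le fun i hi => ?_
  obtain ⟨ℓ, hℓ, hqM⟩ := hM.exists_eq_sum_Iic_and_le i
  have hsucc := hM (Order.succ i)
  rw [Iio_succ_eq_Iic_of_not_isMax hi] at hsucc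
  have hmin := inf'_le (fun ℓ => ∑ j ∈ Iic (Order.succ i), q ℓ j) (mem_univ ℓ)
  rw [sum_Iic_eq_add_sum_Iio, Iio_succ_eq_Iic_of_not_isMax hi] at hmin
  linarith [hq ℓ (Order.le_succ i)]

end IsMeet

end Meet

section Geometric

variable {z a μ : ℝ}

/-- `Geom_{1/z}(t + 1)`: the geometric distribution is indexed from `0` here. -/
noncomputable def geomWeight (z : ℝ) (t : ℕ) : ℝ := 1 / z * (1 - 1 / z) ^ t

theorem geomWeight_nonneg (hz : 1 ≤ z) (t : ℕ) : 0 ≤ geomWeight z t := by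
  have hr : 0 ≤ 1 - 1 / z := sub_nonneg.2 ((div_le_one (by linarith)).2 hz)
  unfold geomWeight
  positivity

theorem geomWeight_le (hz : 1 ≤ z) (t : ℕ) : geomWeight z t ≤ 1 / z := by
  have hr : 0 ≤ 1 - 1 / z := sub_nonneg.2 ((div_le_one (by linarith)).2 hz)
  have hr1 : (1 - 1 / z) ^ t ≤ 1 := pow_le_one₀ hr (by simp [show 0 ≤ z by linarith])
  exact mul_le_of_le_one_right (by positivity) hr1

theorem sum_range_geomWeight (z : ℝ) (n : ℕ) :
    ∑ t ∈ range n, geomWeight z t = 1 - (1 - 1 / z) ^ n := by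
  simp only [geomWeight]
  rw [← mul_sum]
  simpa using mul_neg_geom_sum (1 - 1 / z) n

theorem sub_one_mul_geomWeight (hz : z ≠ 0) (t : ℕ) :
    (z - 1) * geomWeight z t = (1 - 1 / z) ^ (t + 1) := by
  rw [geomWeight, pow_succ]
  field_simp

theorem mul_le_of_le_mul_geomWeight (hz : 1 ≤ z) (ha : 0 < a) {t : ℕ}
    (h : a ≤ μ * geomWeight z t) : z * a ≤ μ := by
  have hμ : 0 ≤ μ := by
    by_contra! hμ
    linarith [mul_nonpos_of_nonpos_of_nonneg hμ.le (geomWeight_nonneg hz t)]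
  have hle : a ≤ μ / z := by
    rw [div_eq_mul_one_div]
    exact h.trans (mul_le_mul_of_nonneg_left (geomWeight_le hz t) hμ)
  rwa [le_div_iff₀' (by linarith)] at hle

theorem sum_mul_geomWeight_le (hz : 1 ≤ z) (ha : 0 ≤ a) (hμ : z * a ≤ μ) {T : Finset ℕ}
    (hT : ∀ t ∈ T, a ≤ μ * geomWeight z t) :
    ∑ t ∈ T, μ * geomWeight z t ≤ μ - (z - 1) * a := by
  have hμ0 : 0 ≤ μ := by nlinarith
  rcases T.eq_empty_or_nonempty with rfl | hne
  · simp only [sum_empty]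
    nlinarith
  set τ := T.max' hne
  calc ∑ t ∈ T, μ * geomWeight z t
      ≤ ∑ t ∈ range (τ + 1), μ * geomWeight z t :=
        sum_le_sum_of_subset_of_nonneg
          (fun t ht => mem_range.2 (Nat.lt_succ_of_le (T.le_max' t ht)))
          (fun t _ _ => mul_nonneg hμ0 (geomWeight_nonneg hz t))
    _ = μ - (z - 1) * (μ * geomWeight z τ) := by
        rw [← mul_sum, sum_range_geomWeight, mul_left_comm,
          sub_one_mul_geomWeight (by linarith)]
        ring
    _ ≤ μ - (z - 1) * a := by
        gcongr
        exact hT τ (T.max'_mem hne)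

theorem sum_mul_geomWeight_le_sum_sub {κ : Type*} [Fintype κ] (M : κ → ℝ) (hz : 1 ≤ z)
    (ha : 0 < a) {E : Finset (κ × ℕ)} (hE : ∀ q ∈ E, a ≤ M q.1 * geomWeight z q.2) :
    ∑ q ∈ E, M q.1 * geomWeight z q.2 ≤ ∑ k with z * a ≤ M k, (M k - (z - 1) * a) := by
  rw [sum_finset_product' E _ (fun k => E.preimage (Prod.mk k) (Prod.mk_right_injective k).injOn)
    (f := fun k t => M k * geomWeight z t)]
  · exact sum_le_sum fun k hk => sum_mul_geomWeight_le hz ha.le (mem_filter.1 hk).2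
      fun t ht => hE _ (mem_preimage.1 ht)
  · intro q
    simp only [mem_filter, mem_univ, true_and, mem_preimage, Prod.mk.eta]
    exact ⟨fun hq => ⟨mul_le_of_le_mul_geomWeight hz ha (hE q hq), hq⟩, And.right⟩

end Geometric

theorem greedy_geometric_prefix_implies_large_next_general
    (m n : ℕ) [NeZero m] [NeZero n]
    (p : Fin m → ℕ → Fin n → ℝ)      -- residuals: `p ℓ t` before step `t`; `p ℓ 0 = p_ℓ`
    (G : ℕ → ℝ)                       -- greedy output sequence
    (M : Fin n → ℝ)                   -- sorted values of ∧S
    (hsort : ∀ ℓ, Antitone (p ℓ 0))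
    (hpos : ∀ ℓ k, 0 ≤ p ℓ 0 k)
    (hG : ∀ t, G t = univ.inf' univ_nonempty fun ℓ => univ.sup' univ_nonempty (p ℓ t))
    (hstep : ∀ t ℓ, ∃ k, (∀ k', p ℓ t k' ≤ p ℓ t k) ∧
      p ℓ (t + 1) = Function.update (p ℓ t) k (p ℓ t k - G t))
    (hM : ∀ i, M i =
      (univ.inf' univ_nonempty fun ℓ => ∑ j ∈ Iic i, p ℓ 0 j) - ∑ j ∈ Iio i, M j)
    (z : ℕ) (hz : 2 ≤ z)
    (Mz : ℕ → ℝ) (e : ℕ ≃ Fin n × ℕ)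
    (hMz : ∀ i, Mz i = M (e i).1 * ((1 / (z : ℝ)) * (1 - 1 / (z : ℝ)) ^ (e i).2))
    (hMzsort : Antitone Mz) :
    ∀ i' j' : ℕ,
      (∑ k ∈ Finset.range j', G k) < (∑ k ∈ Finset.range (i' + 1), Mz k) →
      ((z : ℝ) - 1) * Mz i' ≤ G j' := by
  intro i' j' hlt
  by_contra! hsmall
  have hrun : IsGreedyRun p G := ⟨hG, hstep⟩
  have hMeet : IsMeet (fun ℓ => p ℓ 0) M := hM
  have hMz' : ∀ i, Mz i = M (e i).1 * geomWeight z (e i).2 := hMz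
  have hz1 : (1 : ℝ) ≤ z := by exact_mod_cast (by omega : 1 ≤ z)
  set a := Mz i'
  have ha : 0 < a := by
    by_contra! ha
    nlinarith [hrun.output_nonneg hpos j']
  set K := univ.filter fun k => (z : ℝ) * a ≤ M k
  have hK : IsLowerSet (K : Set (Fin n)) := fun k k' hk'k hk => by
    simp only [K, coe_filter, mem_univ, true_and, Set.mem_ofPred_eq] at hk ⊢
    exact hk.trans (hMeet.antitone hsort hk'k)
  have hgeom : ∑ i ∈ range (i' + 1), Mz i ≤ ∑ k ∈ K, (M k - ((z : ℝ) - 1) * a) := by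
    rw [sum_congr rfl fun i _ => hMz' i]
    refine (sum_map _ e.toEmbedding fun q => M q.1 * geomWeight z q.2).symm.trans_le
      (sum_mul_geomWeight_le_sum_sub M hz1 ha fun q hq => ?_)
    obtain ⟨i, hi, rfl⟩ := mem_map.1 hq
    rw [Equiv.coe_toEmbedding, ← hMz']
    exact hMzsort (Nat.lt_succ_iff.1 (mem_range.1 hi))
  obtain ⟨ℓ, hgreedy⟩ := hrun.exists_sum_sub_le_sum_range_output hpos hsmall
  have hmeet := hMeet.sum_le_of_isLowerSet hK ℓ
  have hgreedyK := hgreedy K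
  rw [sum_sub_distrib] at hgeom hgreedyK
  linarith

/-- **Claim 8.**  With `G` the greedy coupling output sequence for `S = {p₁,…,p_m}`,
`M` the sorted value sequence of `∧S`, integer `z ≥ 2`, and `Mz` the nonincreasing
enumeration (via the bijection `e`) of the multiset
`{M k · (1/z)(1−1/z)^t : k ∈ Fin n, t ∈ ℕ}` (i.e. `M_S^{1/z} = ∧S × Geom_{1/z}`):
for all indices `i', j'` (0-indexed; prefixes of lengths `i'+1` and `j'`),
if `∑_{k=1}^{j'} G k < ∑_{k=1}^{i'+1} Mz k` then `G (j'+1) ≥ (z−1)·Mz i'`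
(in 0-indexed form: `(z−1)·Mz i' ≤ G j'`). -/
theorem greedy_geometric_prefix_implies_large_next
    (m n : ℕ) [NeZero m] [NeZero n]
    (p : Fin m → ℕ → Fin n → ℝ)      -- residuals: `p ℓ t` before step `t`; `p ℓ 0 = p_ℓ`
    (G : ℕ → ℝ)                       -- greedy output sequence
    (M : Fin n → ℝ)                   -- sorted values of ∧S
    (hsort : ∀ ℓ, Antitone (p ℓ 0))
    (hpos : ∀ ℓ k, 0 ≤ p ℓ 0 k)
    (hsum : ∀ ℓ, ∑ k, p ℓ 0 k = 1)
    (hG : ∀ t, G t = univ.inf' univ_nonempty fun ℓ => univ.sup' univ_nonempty (p ℓ t))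
    (hstep : ∀ t ℓ, ∃ k, (∀ k', p ℓ t k' ≤ p ℓ t k) ∧
      p ℓ (t + 1) = Function.update (p ℓ t) k (p ℓ t k - G t))
    (hM : ∀ i, M i =
      (univ.inf' univ_nonempty fun ℓ => ∑ j ∈ Iic i, p ℓ 0 j) - ∑ j ∈ Iio i, M j)
    (z : ℕ) (hz : 2 ≤ z)
    (Mz : ℕ → ℝ) (e : ℕ ≃ Fin n × ℕ)
    (hMz : ∀ i, Mz i = M (e i).1 * ((1 / (z : ℝ)) * (1 - 1 / (z : ℝ)) ^ (e i).2))
    (hMzsort : Antitone Mz) :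
    ∀ i' j' : ℕ,
      (∑ k ∈ Finset.range j', G k) < (∑ k ∈ Finset.range (i' + 1), Mz k) →
      ((z : ℝ) - 1) * Mz i' ≤ G j' :=
  greedy_geometric_prefix_implies_large_next_general m n p G M hsort hpos hG hstep hM z hz Mz e hMz
    hMzsort
end

section
/- Let p and q be probability distributions (finite or countable sequences of nonincreasing nonnegative values summing to 1) with finite entropy, and let α > 0. If p ≼_α q (p is α-strongly majorized by q), then H(q) ≤ H(p) − log₂(α). -/
/-!
Lay out the masses of `p` and of `q` as consecutive intervals of `[0, 1)` and couple the two
distributions by the lengths of the overlaps. If the `i`-th interval of `p` meets the `j`-th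
interval of `q`, and `j'` witnesses `p ≼_α q` at `i`, then the cumulative-sum condition forces
`j ≤ j'`, so `α p i ≤ q j' ≤ q j` and `log (1 / q j) ≤ log (1 / p i) - log α`. Averaging this
over the coupling gives `H(q) ≤ H(p) - log α`.
-/

open Finset Real Filter Topology

/-- The length of `[a, b) ∩ [c, d)`. -/
def overlap (a b c d : ℝ) : ℝ := max 0 (min b d - max a c)

lemma overlap_nonneg (a b c d : ℝ) : 0 ≤ overlap a b c d := le_max_left _ _

lemma overlap_comm (a b c d : ℝ) : overlap a b c d = overlap c d a b := by
  rw [overlap, overlap, min_comm b d, max_comm a c]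

lemma overlap_pos_iff {a b c d : ℝ} : 0 < overlap a b c d ↔ max a c < min b d := by
  rw [overlap, lt_max_iff, sub_pos, or_iff_right (lt_irrefl 0)]

lemma overlap_add_overlap {a b c d e : ℝ} (hcd : c ≤ d) (hde : d ≤ e) :
    overlap a b c d + overlap a b d e = overlap a b c e := by
  simp only [overlap, max_def, min_def]
  split_ifs <;> linarith

lemma overlap_of_le_of_le {a b c d : ℝ} (hca : c ≤ a) (hab : a ≤ b) (hbd : b ≤ d) :
    overlap a b c d = b - a := by
  rw [overlap, min_eq_left hbd, max_eq_left hca, max_eq_right (sub_nonneg.2 hab)]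

lemma overlap_self_right (a b c : ℝ) : overlap a b c c = 0 := by
  rw [overlap, max_eq_left]
  linarith [min_le_right b c, le_max_right a c]

lemma hasSum_overlap {P : ℕ → ℝ} {L c d : ℝ} (hP : Monotone P)
    (hlim : Tendsto P atTop (𝓝 L)) (hc : P 0 ≤ c) (hcd : c ≤ d) (hd : d ≤ L) :
    HasSum (fun n => overlap c d (P n) (P (n + 1))) (d - c) := by
  have partial_sum :
      ∀ N, ∑ n ∈ range N, overlap c d (P n) (P (n + 1)) = overlap c d (P 0) (P N) := by
    intro N
    induction N with
    | zero => rw [sum_range_zero, overlap_self_right]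
    | succ N ih => rw [sum_range_succ, ih, overlap_add_overlap (hP N.zero_le) (hP N.le_succ)]
  have htendsto : Tendsto (fun N => overlap c d (P 0) (P N)) atTop
      (𝓝 (overlap c d (P 0) L)) :=
    tendsto_const_nhds.max ((tendsto_const_nhds.min hlim).sub tendsto_const_nhds)
  rw [overlap_of_le_of_le hc hcd hd] at htendsto
  rw [hasSum_iff_tendsto_nat_of_nonneg fun n => overlap_nonneg _ _ _ _]
  exact htendsto.congr fun N => (partial_sum N).symm

lemma monotone_sum_range_of_nonneg {p : ℕ → ℝ} (hp : ∀ i, 0 ≤ p i) :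
    Monotone fun n => ∑ k ∈ range n, p k :=
  fun _ _ hmn => sum_le_sum_of_subset_of_nonneg (range_subset_range.2 hmn) fun k _ _ => hp k

/-- The overlap of the `i`-th interval of `p` with the `j`-th interval of `q`, when the masses
of each are laid out as consecutive intervals of `[0, 1)`. -/
def quantileCoupling (p q : ℕ → ℝ) (i j : ℕ) : ℝ :=
  overlap (∑ k ∈ range i, p k) (∑ k ∈ range (i + 1), p k)
    (∑ k ∈ range j, q k) (∑ k ∈ range (j + 1), q k)

section quantileCoupling

variable {p q : ℕ → ℝ}

lemma quantileCoupling_comm (i j : ℕ) : quantileCoupling p q i j = quantileCoupling q p j i :=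
  overlap_comm _ _ _ _

lemma hasSum_quantileCoupling (hp : ∀ i, 0 ≤ p i) (hp1 : HasSum p 1) (hq : ∀ j, 0 ≤ q j)
    (hq1 : HasSum q 1) (i : ℕ) : HasSum (quantileCoupling p q i) (p i) := by
  have h := hasSum_overlap (monotone_sum_range_of_nonneg hq) hq1.tendsto_sum_nat
    (by simpa using sum_nonneg fun k _ => hp k)
    (monotone_sum_range_of_nonneg hp i.le_succ) (sum_le_hasSum _ (fun k _ => hp k) hp1)
  rwa [sum_range_succ_sub_sum] at h

lemma hasSum_quantileCoupling_swap (hp : ∀ i, 0 ≤ p i) (hp1 : HasSum p 1) (hq : ∀ j, 0 ≤ q j)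
    (hq1 : HasSum q 1) (j : ℕ) : HasSum (quantileCoupling p q · j) (q j) := by
  simpa only [quantileCoupling_comm _ j] using hasSum_quantileCoupling hq hq1 hp hp1 j

lemma pos_of_quantileCoupling_pos {i j : ℕ} (h : 0 < quantileCoupling p q i j) : 0 < p i := by
  rw [quantileCoupling, overlap_pos_iff, max_lt_iff, lt_min_iff, lt_min_iff] at h
  simpa [sum_range_succ] using h.1.1

lemma le_of_quantileCoupling_pos (hq : ∀ j, 0 ≤ q j) {i j j' : ℕ}
    (h : 0 < quantileCoupling p q i j)
    (hij' : ∑ k ∈ range (i + 1), p k ≤ ∑ k ∈ range (j' + 1), q k) : j ≤ j' := by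
  rw [quantileCoupling, overlap_pos_iff, max_lt_iff, lt_min_iff, lt_min_iff] at h
  exact Nat.lt_succ_iff.1 ((monotone_sum_range_of_nonneg hq).reflect_lt (h.2.1.trans_le hij'))

end quantileCoupling

theorem tsum_mul_le_tsum_mul_of_coupling {ι κ : Type*} {m : ι → κ → ℝ} {p : ι → ℝ} {q : κ → ℝ}
    {f : ι → ℝ} {g : κ → ℝ} (hm : ∀ i j, 0 ≤ m i j) (hp : ∀ i, HasSum (m i) (p i))
    (hq : ∀ j, HasSum (m · j) (q j)) (hg : ∀ j, 0 ≤ g j) (hgf : ∀ i j, 0 < m i j → g j ≤ f i)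
    (hf : Summable fun i => p i * f i) :
    ∑' j, q j * g j ≤ ∑' i, p i * f i := by
  set F : ι × κ → ℝ := fun x => m x.1 x.2 * f x.1
  set G : ι × κ → ℝ := fun x => m x.1 x.2 * g x.2
  have hG : 0 ≤ G := fun x => mul_nonneg (hm _ _) (hg _)
  have hGF : G ≤ F := by
    intro x
    rcases (hm x.1 x.2).eq_or_lt with h | h
    · simp [F, G, ← h]
    · exact mul_le_mul_of_nonneg_left (hgf _ _ h) h.le
  have hF_row : ∀ i, HasSum (fun j => F (i, j)) (p i * f i) := fun i => (hp i).mul_right _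
  have hF : Summable F := (summable_prod_of_nonneg (hG.trans hGF)).2
    ⟨fun i => (hF_row i).summable, by simpa only [(hF_row _).tsum_eq] using hf⟩
  have hGsum : Summable G := hF.of_nonneg_of_le hG hGF
  have hG_col : HasSum (fun j => q j * g j) (∑' x, G x) :=
    ((Equiv.prodComm κ ι).hasSum_iff.2 hGsum.hasSum).prod_fiberwise fun j => (hq j).mul_right _
  calc ∑' j, q j * g j = ∑' x, G x := hG_col.tsum_eq
    _ ≤ ∑' x, F x := Summable.tsum_le_tsum hGF hGsum hF
    _ = ∑' i, p i * f i := (hF.hasSum.prod_fiberwise hF_row).tsum_eq.symm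

lemma mul_logb_inv_mul (b : ℝ) {α : ℝ} (hα : α ≠ 0) (x : ℝ) :
    x * logb b (α * x)⁻¹ = x * logb b x⁻¹ - x * logb b α := by
  rcases eq_or_ne x 0 with rfl | hx
  · simp
  · rw [logb_inv, logb_inv, logb_mul hα hx]
    ring

theorem entropy_le_of_strongly_majorized_general
    (p q : ℕ → ℝ) (α : ℝ) (hα : 0 < α)
    (hppos : ∀ i, 0 ≤ p i) (hpsum : HasSum p 1)
    (hqsort : Antitone q) (hqpos : ∀ i, 0 ≤ q i) (hqsum : HasSum q 1)
    (hpent : Summable fun i => p i * Real.logb 2 (p i)⁻¹)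
    (hmaj : ∀ i : ℕ, ∃ j : ℕ,
      (∑ k ∈ Finset.range (i + 1), p k ≤ ∑ k ∈ Finset.range (j + 1), q k) ∧
      α * p i ≤ q j) :
    (∑' i : ℕ, q i * Real.logb 2 (q i)⁻¹) ≤
      (∑' i : ℕ, p i * Real.logb 2 (p i)⁻¹) - Real.logb 2 α := by
  have hsplit := mul_logb_inv_mul 2 hα.ne'
  have hlog_nonneg : ∀ j, 0 ≤ logb 2 (q j)⁻¹ := fun j => by
    rw [logb_inv, neg_nonneg]
    exact logb_nonpos one_lt_two (hqpos j) (le_hasSum hqsum j fun k _ => hqpos k)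
  have hlog_le : ∀ i j, 0 < quantileCoupling p q i j → logb 2 (q j)⁻¹ ≤ logb 2 (α * p i)⁻¹ := by
    intro i j hij
    obtain ⟨j', hcum, hmass⟩ := hmaj i
    have hjj' := le_of_quantileCoupling_pos hqpos hij hcum
    rw [logb_inv, logb_inv, neg_le_neg_iff]
    exact logb_le_logb_of_le one_lt_two (mul_pos hα (pos_of_quantileCoupling_pos hij))
      (hmass.trans (hqsort hjj'))
  have key := tsum_mul_le_tsum_mul_of_coupling (fun _ _ => overlap_nonneg _ _ _ _)
    (hasSum_quantileCoupling hppos hpsum hqpos hqsum)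
    (hasSum_quantileCoupling_swap hppos hpsum hqpos hqsum) hlog_nonneg hlog_le
    (by simpa only [hsplit] using hpent.sub (hpsum.summable.mul_right (logb 2 α)))
  rwa [tsum_congr fun i => hsplit (p i), hpent.tsum_sub (hpsum.summable.mul_right _),
    tsum_mul_right, hpsum.tsum_eq, one_mul] at key

/-- **Lemma 3 (entropy under strong majorization).**
Let `p, q : ℕ → ℝ` be (finite-or-countable, sorted) probability distributions with
finite entropy (expressed by summability of the entropy series), and let `α > 0`.
If `p ≼_α q`, i.e. for every index `i` there is `j` with
`∑_{k≤i} p k ≤ ∑_{k≤j} q k` and `α·p i ≤ q j`, then `H(q) ≤ H(p) − log₂ α`. -/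
theorem entropy_le_of_strongly_majorized
    (p q : ℕ → ℝ) (α : ℝ) (hα : 0 < α)
    (hpsort : Antitone p) (hppos : ∀ i, 0 ≤ p i) (hpsum : HasSum p 1)
    (hqsort : Antitone q) (hqpos : ∀ i, 0 ≤ q i) (hqsum : HasSum q 1)
    (hpent : Summable fun i => p i * Real.logb 2 (p i)⁻¹)
    (hqent : Summable fun i => q i * Real.logb 2 (q i)⁻¹)
    (hmaj : ∀ i : ℕ, ∃ j : ℕ,
      (∑ k ∈ Finset.range (i + 1), p k ≤ ∑ k ∈ Finset.range (j + 1), q k) ∧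
      α * p i ≤ q j) :
    (∑' i : ℕ, q i * Real.logb 2 (q i)⁻¹) ≤
      (∑' i : ℕ, p i * Real.logb 2 (p i)⁻¹) - Real.logb 2 α :=
  entropy_le_of_strongly_majorized_general p q α hα hppos hpsum hqsort hqpos hqsum hpent hmaj
end
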